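/- arXiv:math/0209042 — 7 statements merged into one kernel-verified Lean document; each statement's English description precedes it below -/
import Mathlib

section
/- Let k ≥ 1 and r ≥ 2 be integers, m = gcd(k+1, r−1), and fix ω₁ ∈ ℂ such that ω₁^{(r−1)/m} is a primitive m-th root of unity. In the field K = ℂ(u) of rational functions in one variable u, set t = u^{(r−1)/m} and q = ω₁ · u^{−(k+1)/m}. Then for all integers a and b, one has q^a t^b = 1 in K if and only if there exists an integer s with a = (r−1)s and b = (k+1)s. -/
private lemma intDegree_zpow_X (N : ℤ) :
    RatFunc.intDegree ((RatFunc.X : RatFunc ℂ) ^ N) = N := by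
  have hX : (RatFunc.X : RatFunc ℂ) ≠ 0 := RatFunc.X_ne_zero
  have hpow : ∀ n : ℕ, RatFunc.intDegree ((RatFunc.X : RatFunc ℂ) ^ n) = n := by
    intro n
    induction n with
    | zero => simpa using RatFunc.intDegree_one
    | succ n ih =>
      rw [pow_succ, RatFunc.intDegree_mul (pow_ne_zero _ hX) hX, ih, RatFunc.intDegree_X]
      push_cast; ring
  obtain ⟨n, rfl | rfl⟩ := N.eq_nat_or_neg
  · rw [zpow_natCast]; exact hpow n
  · have h1 : (RatFunc.X : RatFunc ℂ) ^ (-(n:ℤ)) = ((RatFunc.X : RatFunc ℂ) ^ n)⁻¹ := by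
      rw [zpow_neg, zpow_natCast]
    have h2 : ((RatFunc.X : RatFunc ℂ) ^ n) * ((RatFunc.X : RatFunc ℂ) ^ n)⁻¹ = 1 :=
      mul_inv_cancel₀ (pow_ne_zero _ hX)
    have h3 := RatFunc.intDegree_mul (pow_ne_zero n hX)
      (inv_ne_zero (pow_ne_zero n hX))
    rw [h2, RatFunc.intDegree_one] at h3
    rw [h1]
    have := hpow n
    omega

private lemma key (c : ℂ) (hc : c ≠ 0) (N : ℤ) :
    RatFunc.C c * (RatFunc.X : RatFunc ℂ) ^ N = 1 ↔ c = 1 ∧ N = 0 := by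
  constructor
  · intro h
    have hX : (RatFunc.X : RatFunc ℂ) ≠ 0 := RatFunc.X_ne_zero
    have hC : (RatFunc.C c : RatFunc ℂ) ≠ 0 := by
      exact (map_ne_zero_iff _ (RingHom.injective _)).mpr hc
    have hN : N = 0 := by
      have h3 := RatFunc.intDegree_mul hC (zpow_ne_zero N hX)
      rw [h, RatFunc.intDegree_one, RatFunc.intDegree_C, intDegree_zpow_X] at h3
      omega
    rw [hN, zpow_zero, mul_one] at h
    have h1 : RatFunc.C c = RatFunc.C 1 := by simpa using h
    exact ⟨RingHom.injective (RatFunc.C : ℂ →+* RatFunc ℂ) h1, hN⟩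
  · rintro ⟨rfl, rfl⟩; simp

/-- For `k ≥ 1`, `r ≥ 2`, `m = gcd(k+1, r−1)`, `ω₁ ∈ ℂ` with
`ω₁^((r−1)/m)` a primitive `m`-th root of unity, and in `K = ℂ(u)`,
`t = u^((r−1)/m)`, `q = ω₁ · u^(−(k+1)/m)`, we have `q^a t^b = 1` iff
`a = (r−1)s` and `b = (k+1)s` for some integer `s`. -/
theorem stmt0 (k r : ℕ) (hk : 1 ≤ k) (hr : 2 ≤ r)
    (m : ℕ) (hm : m = Nat.gcd (k + 1) (r - 1))
    (ω₁ : ℂ) (hω : IsPrimitiveRoot (ω₁ ^ ((r - 1) / m)) m)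
    (t q : RatFunc ℂ)
    (ht : t = RatFunc.X ^ ((r - 1) / m))
    (hq : q = RatFunc.C ω₁ * RatFunc.X ^ (-(((k + 1) / m : ℕ) : ℤ))) :
    ∀ a b : ℤ, q ^ a * t ^ b = 1 ↔
      ∃ s : ℤ, a = ((r : ℤ) - 1) * s ∧ b = ((k : ℤ) + 1) * s := by
  intro a b
  set e : ℕ := (r - 1) / m with he
  set p : ℕ := (k + 1) / m with hp
  have hm0 : 0 < m := by
    rw [hm]; exact Nat.gcd_pos_of_pos_left _ (Nat.succ_pos k)
  have hmr : m ∣ r - 1 := hm ▸ Nat.gcd_dvd_right _ _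
  have hmk : m ∣ k + 1 := hm ▸ Nat.gcd_dvd_left _ _
  have her : e * m = r - 1 := Nat.div_mul_cancel hmr
  have hpk : p * m = k + 1 := Nat.div_mul_cancel hmk
  have he0 : 0 < e := by
    rcases Nat.eq_zero_or_pos e with h | h
    · exfalso; rw [h, zero_mul] at her; omega
    · exact h
  have hp0 : 0 < p := by
    rcases Nat.eq_zero_or_pos p with h | h
    · exfalso; rw [h, zero_mul] at hpk; omega
    · exact h
  have hcop : Nat.Coprime p e := by
    rw [hp, he, hm]
    exact Nat.coprime_div_gcd_div_gcd (hm ▸ hm0)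
  have hω0 : ω₁ ≠ 0 := by
    intro h
    have := hω.pow_eq_one
    rw [h, zero_pow (by omega), zero_pow (by omega)] at this
    exact zero_ne_one this
  have hX : (RatFunc.X : RatFunc ℂ) ≠ 0 := RatFunc.X_ne_zero
  -- rewrite q^a * t^b
  have hqt : q ^ a * t ^ b = RatFunc.C (ω₁ ^ a) * RatFunc.X ^ ((e : ℤ) * b - (p : ℤ) * a) := by
    rw [hq, ht]
    have hCω : (RatFunc.C ω₁ : RatFunc ℂ) ≠ 0 := by
      exact (map_ne_zero_iff _ (RingHom.injective _)).mpr hω0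
    rw [mul_zpow]
    have h1 : ((RatFunc.C ω₁ : RatFunc ℂ)) ^ a = RatFunc.C (ω₁ ^ a) :=
      (map_zpow₀ (RatFunc.C : ℂ →+* RatFunc ℂ) ω₁ a).symm
    have h2 : ((RatFunc.X : RatFunc ℂ) ^ (-(p : ℤ))) ^ a = RatFunc.X ^ (-(p : ℤ) * a) :=
      (zpow_mul _ _ _).symm
    have h3 : ((RatFunc.X : RatFunc ℂ) ^ e) ^ b = RatFunc.X ^ ((e : ℤ) * b) := by
      rw [← zpow_natCast (RatFunc.X : RatFunc ℂ) e, ← zpow_mul]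
    rw [h1, h2, h3, mul_assoc, ← zpow_add₀ hX]
    ring_nf
  rw [hqt, key _ (zpow_ne_zero a hω0) _]
  constructor
  · rintro ⟨hω1, hN⟩
    -- e*b = p*a, coprime p e
    have hdvd : (e : ℤ) ∣ a := by
      have : (e : ℤ) ∣ (p : ℤ) * a := ⟨b, by omega⟩
      have hco : IsCoprime (e : ℤ) (p : ℤ) := Nat.isCoprime_iff_coprime.mpr hcop.symm
      exact hco.dvd_of_dvd_mul_left this
    obtain ⟨c, hc⟩ := hdvd
    have hb : b = (p : ℤ) * c := by
      have he0' : (e : ℤ) ≠ 0 := by exact_mod_cast he0.ne'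
      have : (e : ℤ) * b = (e : ℤ) * ((p : ℤ) * c) := by rw [hc] at hN; ring_nf; ring_nf at hN; omega
      exact mul_left_cancel₀ he0' this
    -- ω₁ ^ (e*c) = 1 gives m ∣ c
    have hsml : (ω₁ ^ e) ^ c = 1 := by
      rw [← zpow_natCast ω₁ e, ← zpow_mul, ← hc, hω1]
    have hmc : (m : ℤ) ∣ c := (hω.zpow_eq_one_iff_dvd c).mp hsml
    obtain ⟨s, hs⟩ := hmc
    refine ⟨s, ?_, ?_⟩
    · rw [hc, hs]
      have : ((r : ℤ) - 1) = (e : ℤ) * m := by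
        have := her; push_cast [← this]; omega
      rw [this]; ring
    · rw [hb, hs]
      have : ((k : ℤ) + 1) = (p : ℤ) * m := by
        have := hpk; push_cast [← this]; omega
      rw [this]; ring
  · rintro ⟨s, ha, hb⟩
    have hrm : ((r : ℤ) - 1) = (e : ℤ) * m := by
      have := her; push_cast [← this]; omega
    have hkm : ((k : ℤ) + 1) = (p : ℤ) * m := by
      have := hpk; push_cast [← this]; omega
    constructor
    · rw [ha, hrm]
      have h4 : ω₁ ^ ((e : ℤ) * (m : ℤ) * s) = ((ω₁ ^ e) ^ m) ^ s := by
        rw [zpow_mul, zpow_mul]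
        norm_cast
      rw [h4, hω.pow_eq_one, one_zpow]
    · rw [ha, hb, hrm, hkm]; ring
end

section
/- Let F be a field, q, t ∈ F nonzero elements satisfying the (k,r)-resonance condition, and n ≥ k+1. Let f ∈ F[x_1,…,x_n] be a symmetric polynomial satisfying the (k,r)-wheel condition, and let I ⊆ {1,…,n} be any subset. Define the polynomial g = (∏_{i∈I, j∉I} (t x_i − x_j)) · f(x̃_1,…,x̃_n), where x̃_i = q x_i if i ∈ I and x̃_i = x_i otherwise. Then for every tuple (s_1,…,s_{k+1}) of nonnegative integers with s_1 + … + s_{k+1} = r−1, the polynomial g becomes identically zero after the substitution x_i = t^{i−1} q^{s_1+…+s_{i−1}} x_1 for i = 2,…,k+1 (as a polynomial in the remaining variables x_1, x_{k+2},…,x_n). -/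
/-!
After the wheel substitution for `s`, the `q`-shift on `I` sends `x_m` (`m ≤ k`) to
`t^m q^{b_m} x_0`, where `b_m = S_m + [x_m ∈ I]` and `S_m = s_0 + ⋯ + s_{m-1}`; we read indices
mod `k+1`, which is harmless because `q^{r-1} t^{k+1} = 1`. If `b` is nondecreasing on
`0, …, k+1`, its increments form a new tuple `s'` with sum `r-1`, and the composite is the
wheel substitution for `s'` followed by the `q`-shift, so it kills `f`. Otherwise `b` drops at
some `m`, which forces `x_m ∈ I`, `x_{m+1} ∉ I` and `s_m = 0`; then the factor `t x_m - x_{m+1}`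
of the cross product vanishes under the wheel substitution.
-/

open MvPolynomial

/-- The wheel substitution `x_1 ↦ x_1`, `x_i ↦ t^{i-1} q^{s_1+⋯+s_{i-1}} x_1`
for `2 ≤ i ≤ k+1` (0-based: `x_i ↦ t^i q^{s_0+⋯+s_{i-1}} x_0` for `i ≤ k`),
leaving the remaining variables fixed. -/
noncomputable def wheelSubst {F : Type*} [CommRing F] (k n : ℕ) (q t : F)
    (hn : k + 1 ≤ n) (s : Fin (k + 1) → ℕ) :
    MvPolynomial (Fin n) F →ₐ[F] MvPolynomial (Fin n) F :=
  MvPolynomial.aeval fun i : Fin n =>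
    if (i : ℕ) ≤ k then
      (t ^ (i : ℕ) *
          q ^ (∑ j ∈ Finset.univ.filter (fun j : Fin (k + 1) => (j : ℕ) < (i : ℕ)), s j)) •
        MvPolynomial.X (⟨0, by omega⟩ : Fin n)
    else MvPolynomial.X i

/-- `f` satisfies the (k,r)-wheel condition: for every tuple
`(s_1,…,s_{k+1})` of nonnegative integers summing to `r−1`, `f` vanishes under
the wheel substitution.  (For `n ≤ k` the condition is vacuous.) -/
def WheelCondition {F : Type*} [CommRing F] (k r n : ℕ) (q t : F)
    (f : MvPolynomial (Fin n) F) : Prop :=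
  ∀ (hn : k + 1 ≤ n) (s : Fin (k + 1) → ℕ), (∑ j, s j) = r - 1 →
    wheelSubst k n q t hn s f = 0

section PartialSum

variable {k : ℕ}

def partialSum (s : Fin (k + 1) → ℕ) (m : ℕ) : ℕ :=
  ∑ j ∈ Finset.univ.filter (fun j : Fin (k + 1) => (j : ℕ) < m), s j

lemma partialSum_zero (s : Fin (k + 1) → ℕ) : partialSum s 0 = 0 := by
  simp [partialSum]

lemma partialSum_succ (s : Fin (k + 1) → ℕ) {m : ℕ} (hm : m ≤ k) :
    partialSum s (m + 1) = partialSum s m + s ⟨m, by omega⟩ := by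
  have hfilter : Finset.univ.filter (fun j : Fin (k + 1) => (j : ℕ) < m + 1) =
      insert ⟨m, by omega⟩ (Finset.univ.filter (fun j : Fin (k + 1) => (j : ℕ) < m)) := by
    ext j
    simp only [Finset.mem_filter, Finset.mem_univ, true_and, Finset.mem_insert, Fin.ext_iff]
    omega
  rw [partialSum, hfilter, Finset.sum_insert (by simp), partialSum, add_comm]

lemma partialSum_last (s : Fin (k + 1) → ℕ) : partialSum s (k + 1) = ∑ j, s j := by
  rw [partialSum, Finset.filter_true_of_mem fun j _ => j.isLt]

lemma partialSum_tsub_add_eq (b : ℕ → ℕ) (hb : ∀ m ≤ k, b m ≤ b (m + 1)) {m : ℕ}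
    (hm : m ≤ k + 1) : partialSum (fun i : Fin (k + 1) => b (i + 1) - b i) m + b 0 = b m := by
  induction m with
  | zero => rw [partialSum_zero, zero_add]
  | succ m ih =>
    have ih := ih (by omega)
    have hbm := hb m (by omega)
    rw [partialSum_succ _ (by omega)]
    dsimp only
    omega

end PartialSum

noncomputable def scaleVars {σ R : Type*} [CommSemiring R] (c : σ → R) :
    MvPolynomial σ R →ₐ[R] MvPolynomial σ R :=
  aeval fun i => C (c i) * X i

section Wheel

variable {F : Type*} [CommRing F] {k n : ℕ} (q t : F) (hn : k + 1 ≤ n) (s : Fin (k + 1) → ℕ)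

def cyclicVar (m : ℕ) : Fin n :=
  ⟨m % (k + 1), (Nat.mod_lt _ k.succ_pos).trans_le hn⟩

lemma cyclicVar_of_le {m : ℕ} (hm : m ≤ k) : cyclicVar hn m = ⟨m, by omega⟩ :=
  Fin.ext (Nat.mod_eq_of_lt (by omega))

lemma cyclicVar_last : cyclicVar hn (k + 1) = ⟨0, by omega⟩ :=
  Fin.ext (Nat.mod_self _)

/-- The exponent of `q` that the wheel substitution for `s` followed by the `q`-shift on `I`
puts in front of `t^m x_0` when substituted for `x_m`. -/
def shiftedExponent (I : Finset (Fin n)) (m : ℕ) : ℕ :=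
  partialSum s m + if cyclicVar hn m ∈ I then 1 else 0

lemma wheelSubst_C (a : F) : wheelSubst k n q t hn s (C a) = C a :=
  algHom_C _ a

lemma wheelSubst_X_of_le {i : Fin n} (hi : (i : ℕ) ≤ k) :
    wheelSubst k n q t hn s (X i) = C (t ^ (i : ℕ) * q ^ partialSum s i) * X ⟨0, by omega⟩ := by
  rw [wheelSubst, aeval_X, if_pos hi, smul_eq_C_mul]
  rfl

lemma wheelSubst_X_of_lt {i : Fin n} (hi : k < (i : ℕ)) : wheelSubst k n q t hn s (X i) = X i := by
  rw [wheelSubst, aeval_X, if_neg (by omega)]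

lemma wheelSubst_X_cyclicVar (hqt : q ^ (∑ j, s j) * t ^ (k + 1) = 1) {m : ℕ} (hm : m ≤ k + 1) :
    wheelSubst k n q t hn s (X (cyclicVar hn m)) =
      C (t ^ m * q ^ partialSum s m) * X ⟨0, by omega⟩ := by
  rcases hm.lt_or_eq with hm | rfl
  · rw [cyclicVar_of_le hn (by omega), wheelSubst_X_of_le q t hn s (Nat.le_of_lt_succ hm)]
  · rw [cyclicVar_last, wheelSubst_X_of_le q t hn s (Nat.zero_le k), partialSum_last,
      mul_comm (t ^ (k + 1)), hqt]
    simp [partialSum_zero]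

lemma wheelSubst_crossProd_eq_zero (hqt : q ^ (∑ j, s j) * t ^ (k + 1) = 1)
    (I : Finset (Fin n)) {m : ℕ} (hm : m ≤ k)
    (hdrop : shiftedExponent hn s I (m + 1) < shiftedExponent hn s I m) :
    wheelSubst k n q t hn s (∏ i ∈ I, ∏ j ∈ Iᶜ, (C t * X i - X j)) = 0 := by
  obtain ⟨hmI, hsuccI, hS⟩ : cyclicVar hn m ∈ I ∧ cyclicVar hn (m + 1) ∈ Iᶜ ∧
      partialSum s (m + 1) = partialSum s m := by
    have hstep := partialSum_succ s hm
    unfold shiftedExponent at hdrop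
    split_ifs at hdrop <;> first | omega | exact ⟨‹_›, Finset.mem_compl.2 ‹_›, by omega⟩
  simp only [map_prod]
  refine Finset.prod_eq_zero hmI (Finset.prod_eq_zero hsuccI ?_)
  rw [map_sub, map_mul, wheelSubst_C, wheelSubst_X_cyclicVar q t hn s hqt (by omega),
    wheelSubst_X_cyclicVar q t hn s hqt (by omega), hS]
  simp only [map_mul, map_pow, pow_succ]
  ring

lemma wheelSubst_comp_scaleVars (c : Fin n → F) {s s' : Fin (k + 1) → ℕ}
    (h : ∀ i : Fin n, (i : ℕ) ≤ k →
      c i * q ^ partialSum s i = c ⟨0, by omega⟩ * q ^ partialSum s' i) :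
    (wheelSubst k n q t hn s).comp (scaleVars c) =
      (scaleVars c).comp (wheelSubst k n q t hn s') := by
  ext i : 1
  simp only [AlgHom.comp_apply, scaleVars, aeval_X]
  rw [map_mul, wheelSubst_C]
  by_cases hi : (i : ℕ) ≤ k
  · rw [wheelSubst_X_of_le q t hn s hi, wheelSubst_X_of_le q t hn s' hi]
    have hC := congrArg (C (σ := Fin n)) (h i hi)
    simp only [map_mul, aeval_C, aeval_X, algebraMap_eq] at hC ⊢
    linear_combination C (t ^ (i : ℕ)) * X ⟨0, by omega⟩ * hC
  · rw [wheelSubst_X_of_lt q t hn s (by omega), wheelSubst_X_of_lt q t hn s' (by omega),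
      aeval_X]

lemma wheelSubst_shift_eq_zero {r : ℕ} (f : MvPolynomial (Fin n) F)
    (hwheel : WheelCondition k r n q t f) (I : Finset (Fin n)) (hs : ∑ j, s j = r - 1)
    (hmono : ∀ m ≤ k, shiftedExponent hn s I m ≤ shiftedExponent hn s I (m + 1)) :
    wheelSubst k n q t hn s (aeval (fun i => if i ∈ I then C q * X i else X i) f) = 0 := by
  set b := shiftedExponent hn s I
  set s' : Fin (k + 1) → ℕ := fun i => b (i + 1) - b i
  have hs' : ∀ m ≤ k + 1, partialSum s' m + b 0 = b m :=
    fun m hm => partialSum_tsub_add_eq b hmono hm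
  have hb0 : b 0 = if (⟨0, by omega⟩ : Fin n) ∈ I then 1 else 0 := by
    simp only [b, shiftedExponent, partialSum_zero, zero_add, cyclicVar_of_le hn (Nat.zero_le k)]
  have hsum : ∑ j, s' j = r - 1 := by
    have hlast := hs' (k + 1) le_rfl
    simp only [b, shiftedExponent, partialSum_last, cyclicVar_last] at hlast hb0
    omega
  have hshift : aeval (fun i => if i ∈ I then C q * X i else X i) =
      scaleVars (fun i => q ^ if i ∈ I then 1 else 0) := by
    congr 1
    funext i
    by_cases hi : i ∈ I <;> simp [hi]
  rw [hshift, ← AlgHom.comp_apply, wheelSubst_comp_scaleVars q t hn _ (s' := s'),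
    AlgHom.comp_apply, hwheel hn s' hsum, map_zero]
  intro i hi
  rw [← pow_add, ← pow_add]
  congr 1
  have hbi : b i = partialSum s i + if i ∈ I then 1 else 0 := by
    simp only [b, shiftedExponent, cyclicVar_of_le hn hi, Fin.eta]
  have := hs' i (by omega)
  omega

end Wheel

theorem stmt3_general (k r n : ℕ) (hr : 2 ≤ r)
    (F : Type*) [Field F] (q t : F)
    (hres : ∀ a b : ℤ, q ^ a * t ^ b = 1 ↔
      ∃ s : ℤ, a = ((r : ℤ) - 1) * s ∧ b = ((k : ℤ) + 1) * s)
    (f : MvPolynomial (Fin n) F)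
    (hwheel : WheelCondition k r n q t f)
    (I : Finset (Fin n)) :
    WheelCondition k r n q t
      ((∏ i ∈ I, ∏ j ∈ Iᶜ, (MvPolynomial.C t * MvPolynomial.X i - MvPolynomial.X j)) *
        MvPolynomial.aeval
          (fun i : Fin n => if i ∈ I then MvPolynomial.C q * MvPolynomial.X i
            else MvPolynomial.X i) f) := by
  intro hn s hs
  have hqt : q ^ (∑ j, s j) * t ^ (k + 1) = 1 := by
    have h := (hres ((r : ℤ) - 1) ((k : ℤ) + 1)).2 ⟨1, by ring, by ring⟩
    rwa [show ((r : ℤ) - 1) = ((r - 1 : ℕ) : ℤ) by omega,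
      show ((k : ℤ) + 1) = ((k + 1 : ℕ) : ℤ) by push_cast; ring, zpow_natCast, zpow_natCast,
      ← hs] at h
  rw [map_mul]
  by_cases hmono : ∀ m ≤ k, shiftedExponent hn s I m ≤ shiftedExponent hn s I (m + 1)
  · exact mul_eq_zero_of_right _ (wheelSubst_shift_eq_zero q t hn s f hwheel I hs hmono)
  · push Not at hmono
    obtain ⟨m, hm, hdrop⟩ := hmono
    exact mul_eq_zero_of_left (wheelSubst_crossProd_eq_zero q t hn s hqt I hm hdrop) _

/-- if the symmetric polynomial `f` satisfies the (k,r)-wheel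
condition, then for any subset `I` of the variables, the polynomial
`g = (∏_{i∈I,j∉I} (t x_i − x_j)) · T_I f` (where `T_I` multiplies the
variables in `I` by `q`) again vanishes under every wheel substitution. -/
theorem stmt3 (k r n : ℕ) (hk : 1 ≤ k) (hr : 2 ≤ r) (hn : k + 1 ≤ n)
    (F : Type*) [Field F] (q t : F) (hq0 : q ≠ 0) (ht0 : t ≠ 0)
    (hres : ∀ a b : ℤ, q ^ a * t ^ b = 1 ↔
      ∃ s : ℤ, a = ((r : ℤ) - 1) * s ∧ b = ((k : ℤ) + 1) * s)
    (f : MvPolynomial (Fin n) F) (hsym : f.IsSymmetric)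
    (hwheel : WheelCondition k r n q t f)
    (I : Finset (Fin n)) :
    WheelCondition k r n q t
      ((∏ i ∈ I, ∏ j ∈ Iᶜ, (MvPolynomial.C t * MvPolynomial.X i - MvPolynomial.X j)) *
        MvPolynomial.aeval
          (fun i : Fin n => if i ∈ I then MvPolynomial.C q * MvPolynomial.X i
            else MvPolynomial.X i) f) :=
  stmt3_general k r n hr F q t hres f hwheel I
end

section
/- With R̄ = ℂ[e_0, e_1, e_2, …] and the ideal J̄ as defined, the residue classes of the monomials e_λ = e_{λ_1} ⋯ e_{λ_n}, where λ ranges over all (k,r,n)-admissible partitions over all n ≥ 0 (including the empty partition, giving the class of 1), span the quotient R̄/J̄ as a ℂ-vector space. -/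
/-!
The quotient is spanned by the classes of the monomials `e_s = ∏_{x ∈ s} e_x`, `s` a multiset.
If the decreasing arrangement of `s` is not admissible, `s` contains a cluster `t` of `k + 1`
indices of spread at most `q = r - 1`. Averaging the generators of `J̄` against the characters of
`(ℤ/q)^k` (orthogonality of the powers of `τ`) shows that `J̄` contains the sum of the `e_i` over all
`(k+1)`-tuples `i` with the same total as `t` and congruent to it mod `q`. Every such tuple that is
not a rearrangement of `t` has a strictly larger sum of squares, because `(z - m) (z - m - q)` is
minimal on each residue class mod `q` at the points of `[m, m + q]`. So `e_t`, hence `e_s`, is a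
combination of monomials of the same degree and larger sum of squares; as the sum of squares is
bounded by the square of the degree, the rewriting ends with admissible monomials.
-/

open MvPolynomial

/-- The ideal `J̄ ⊆ R̄ = ℂ[e_0,e_1,…]` generated by the Fourier coefficients of
`e(ζ)e(τ^{p_2}ζ)⋯e(τ^{p_{k+1}}ζ)`, i.e. by the elements
`∑_{i_1+⋯+i_{k+1}=d} τ^{p_2 i_2 + ⋯ + p_{k+1} i_{k+1}} e_{i_1}⋯e_{i_{k+1}}`.
The variable `e_i` is `MvPolynomial.X i`. -/
noncomputable def JbarIdeal (k : ℕ) (τ : ℂ) : Ideal (MvPolynomial ℕ ℂ) :=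
  Ideal.span {g : MvPolynomial ℕ ℂ | ∃ (d : ℕ) (p : Fin k → ℤ),
    g = ∑ i ∈ Finset.Nat.antidiagonalTuple (k + 1) d,
      MvPolynomial.C (τ ^ (∑ c : Fin k, p c * ((i c.succ : ℕ) : ℤ))) *
        ∏ c : Fin (k + 1), MvPolynomial.X (i c)}

open Finset

lemma zpow_sum₀ {ι G : Type*} [CommGroupWithZero G] {a : G} (ha : a ≠ 0) (s : Finset ι)
    (f : ι → ℤ) : a ^ (∑ i ∈ s, f i) = ∏ i ∈ s, a ^ f i := by
  classical
  induction s using Finset.induction with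
  | empty => simp
  | insert i s hi ih => rw [sum_insert hi, prod_insert hi, zpow_add₀ ha, ih]

namespace IsPrimitiveRoot

variable {K : Type*} [Field K] {ζ : K} {q : ℕ}

lemma sum_range_zpow_pow (hζ : IsPrimitiveRoot ζ q) (δ : ℤ) :
    ∑ j ∈ range q, (ζ ^ δ) ^ j = if (q : ℤ) ∣ δ then (q : K) else 0 := by
  split_ifs with h
  · simp [(hζ.zpow_eq_one_iff_dvd δ).mpr h]
  · have hne : ζ ^ δ ≠ 1 := fun h1 => h ((hζ.zpow_eq_one_iff_dvd δ).mp h1)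
    rw [geom_sum_eq hne, ← zpow_natCast, ← zpow_mul, mul_comm, zpow_mul, hζ.zpow_eq_one,
      one_zpow, sub_self, zero_div]

lemma sum_piFinset_prod_zpow_pow {ι : Type*} [Fintype ι] [DecidableEq ι]
    (hζ : IsPrimitiveRoot ζ q) (δ : ι → ℤ) :
    ∑ p ∈ Fintype.piFinset (fun _ : ι => range q), ∏ c, (ζ ^ δ c) ^ p c =
      if ∀ c, (q : ℤ) ∣ δ c then (q : K) ^ Fintype.card ι else 0 := by
  simp only [sum_prod_piFinset, hζ.sum_range_zpow_pow, prod_ite_zero, prod_const, card_univ,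
    mem_univ, true_implies]

end IsPrimitiveRoot

lemma mem_span_image_of_sum_eq_zero {ι K M : Type*} [Field K] [CharZero K] [AddCommGroup M]
    [Module K M] {s : Finset ι} {v : ι → M} {x : M} (P : ι → Prop) [DecidablePred P]
    (hsum : ∑ i ∈ s, v i = 0) (hP : ∀ i ∈ s, P i → v i = x) (hex : ∃ i ∈ s, P i) :
    x ∈ Submodule.span K (v '' {i | i ∈ s ∧ ¬P i}) := by
  have hcard : ((s.filter P).card : K) ≠ 0 :=
    Nat.cast_ne_zero.mpr (card_pos.mpr (filter_nonempty_iff.mpr hex)).ne'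
  rw [← sum_filter_add_sum_filter_not s P,
    sum_congr rfl fun i hi => hP i (mem_filter.mp hi).1 (mem_filter.mp hi).2, sum_const,
    ← Nat.cast_smul_eq_nsmul K, add_eq_zero_iff_eq_neg] at hsum
  rw [← Submodule.smul_mem_iff _ hcard, hsum]
  refine Submodule.neg_mem _ (Submodule.sum_mem _ fun i hi => Submodule.subset_span ?_)
  exact ⟨i, by simpa using hi, rfl⟩

lemma lt_or_eq_or_swap_of_dvd_sub {m q x y : ℤ} (hq : 0 < q) (hmx : m ≤ x) (hxm : x ≤ m + q)
    (hxy : q ∣ y - x) :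
    (x - m) * (x - m - q) < (y - m) * (y - m - q) ∨
      y = x ∨ (x = m ∧ y = m + q) ∨ (x = m + q ∧ y = m) := by
  obtain ⟨j, hj⟩ := hxy
  obtain rfl : y = x + q * j := by linarith
  have hdiff : (x + q * j - m) * (x + q * j - m - q) - (x - m) * (x - m - q)
      = q * j * (2 * (x - m) + q * (j - 1)) := by ring
  rcases lt_trichotomy j 0 with hj | rfl | hj
  · rcases (show j = -1 ∨ j ≤ -2 by omega) with rfl | hj2
    · rcases hxm.lt_or_eq with hlt | rfl
      · left; nlinarith
      · right; right; right; constructor <;> ring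
    · have : 2 * (x - m) + q * (j - 1) < 0 := by nlinarith
      left; nlinarith [mul_pos (mul_pos_of_neg_of_neg (neg_neg_of_pos hq) hj) (neg_pos.mpr this)]
  · right; left; ring
  · rcases (show j = 1 ∨ 2 ≤ j by omega) with rfl | hj2
    · rcases hmx.lt_or_eq with hlt | rfl
      · left; nlinarith
      · right; right; left; constructor <;> ring
    · have : 0 < 2 * (x - m) + q * (j - 1) := by nlinarith
      left; nlinarith [mul_pos (mul_pos hq hj) this]

lemma map_univ_val_eq_of_eq_or_swap {ι : Type*} [Fintype ι] {a b : ι → ℤ} {m q : ℤ} (hq : q ≠ 0)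
    (hab : ∀ c, b c = a c ∨ (a c = m ∧ b c = m + q) ∨ (a c = m + q ∧ b c = m))
    (hsum : ∑ c, a c = ∑ c, b c) : univ.val.map a = univ.val.map b := by
  ext x
  -- each coordinate changes the count of `x` by `±1` exactly when it moves by `±q`
  have hcount : ∀ c, q * ((if x = a c then 1 else 0) - (if x = b c then 1 else 0)) =
      ((if x = m then 1 else 0) - (if x = m + q then 1 else 0)) * (b c - a c) := by
    intro c
    rcases hab c with h | h | h
    · rw [h]; ring
    all_goals rw [h.1, h.2]; split_ifs <;> omega
  have htotal := Finset.sum_congr rfl fun c (_ : c ∈ univ) => hcount c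
  rw [← mul_sum, ← mul_sum, sum_sub_distrib, sum_sub_distrib, hsum, sub_self, mul_zero,
    mul_eq_zero, or_iff_right hq, sub_eq_zero] at htotal
  simp only [Multiset.count_map, ← Finset.filter_val, Finset.card_val, Finset.card_filter]
  exact_mod_cast htotal

lemma sum_sq_lt_of_dvd_sub {ι : Type*} [Fintype ι] {a b : ι → ℤ} {m q : ℤ} (hq : 0 < q)
    (ha : ∀ c, m ≤ a c ∧ a c ≤ m + q) (hdvd : ∀ c, q ∣ b c - a c)
    (hsum : ∑ c, a c = ∑ c, b c) (hne : univ.val.map a ≠ univ.val.map b) :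
    ∑ c, a c ^ 2 < ∑ c, b c ^ 2 := by
  set φ : ℤ → ℤ := fun z => (z - m) * (z - m - q)
  -- `φ` differs from `z ^ 2` by an affine function, so it has the same sums over `a` and `b`
  have hφ : ∑ c, (φ (b c) - φ (a c)) = ∑ c, b c ^ 2 - ∑ c, a c ^ 2 := by
    have : ∀ c, φ (b c) - φ (a c) = (b c ^ 2 - a c ^ 2) - (2 * m + q) * (b c - a c) := by
      intro c; ring
    rw [sum_congr rfl fun c _ => this c, sum_sub_distrib, ← mul_sum, sum_sub_distrib,
      sum_sub_distrib, hsum]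
    ring
  have hcases := fun c => lt_or_eq_or_swap_of_dvd_sub hq (ha c).1 (ha c).2 (hdvd c)
  by_contra! hle
  have hnonneg : ∀ c ∈ univ, 0 ≤ φ (b c) - φ (a c) := by
    intro c _
    rcases hcases c with h | h | h | h
    · exact (sub_pos.mpr h).le
    · simp [h]
    all_goals simp [φ, h.1, h.2]
  have hzero := (sum_eq_zero_iff_of_nonneg hnonneg).mp (by linarith [sum_nonneg hnonneg])
  refine hne (map_univ_val_eq_of_eq_or_swap (m := m) hq.ne' (fun c => ?_) hsum)
  exact (hcases c).resolve_left fun h => by linarith [hzero c (mem_univ c)]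

lemma sum_map_sq_le_sq_sum (s : Multiset ℕ) : (s.map (· ^ 2)).sum ≤ s.sum ^ 2 := by
  induction s using Multiset.induction with
  | empty => simp
  | cons a s ih =>
    simp only [Multiset.map_cons, Multiset.sum_cons]
    nlinarith [Nat.zero_le (a * s.sum)]

lemma exists_fin_map_eq {α : Type*} {n : ℕ} {t : Multiset α} (ht : Multiset.card t = n) :
    ∃ f : Fin n → α, univ.val.map f = t := by
  obtain ⟨l, rfl⟩ : ∃ l : List α, (l : Multiset α) = t := Quot.exists_rep t
  rw [Multiset.coe_card] at ht
  subst ht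
  exact ⟨l.get, by rw [Fin.univ_val_map, List.ofFn_get]⟩

lemma prod_map_X_toMultiset {σ R : Type*} [CommSemiring R] (v : σ →₀ ℕ) :
    ((Finsupp.toMultiset v).map X).prod = (monomial v 1 : MvPolynomial σ R) := by
  rw [Finsupp.toMultiset_map, Finsupp.prod_toMultiset,
    Finsupp.prod_mapDomain_index pow_zero fun _ _ _ => pow_add _ _ _, monomial_eq, C_1, one_mul]

lemma span_range_prod_map_X_eq_top {σ R : Type*} [CommSemiring R] :
    Submodule.span R (Set.range fun s : Multiset σ => ((s.map X).prod : MvPolynomial σ R)) = ⊤ := by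
  rw [eq_top_iff, ← (basisMonomials σ R).span_eq]
  refine Submodule.span_mono ?_
  rintro _ ⟨v, rfl⟩
  exact ⟨Finsupp.toMultiset v, prod_map_X_toMultiset v⟩

lemma prod_X_eq_prod_X_of_map_eq {σ R : Type*} [CommSemiring R] {n : ℕ} {i j : Fin n → σ}
    (h : univ.val.map i = univ.val.map j) : ∏ c, (X (i c) : MvPolynomial σ R) = ∏ c, X (j c) := by
  simpa only [prod_eq_multiset_prod, Multiset.map_map, Function.comp_def]
    using congr_arg (fun s => (s.map (X (R := R))).prod) h

lemma sum_filter_dvd_mem_JbarIdeal {k q : ℕ} {τ : ℂ} (hτ : IsPrimitiveRoot τ q) (hq : 0 < q)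
    (d : ℕ) (m : Fin k → ℤ) :
    ∑ i ∈ (Nat.antidiagonalTuple (k + 1) d).filter (fun i => ∀ c, (q : ℤ) ∣ i c.succ - m c),
      ∏ c, X (i c) ∈ JbarIdeal k τ := by
  set A := Nat.antidiagonalTuple (k + 1) d
  have hτ0 : τ ≠ 0 := hτ.ne_zero hq.ne'
  -- Average the generators over the characters `p ↦ τ ^ (-∑ m c * p c)` of `(ℤ/q)^k`.
  set T := ∑ p ∈ Fintype.piFinset (fun _ : Fin k => range q),
    C (τ ^ (-∑ c, m c * p c)) *
      ∑ i ∈ A, C (τ ^ (∑ c, ((p c : ℕ) : ℤ) * ((i c.succ : ℕ) : ℤ))) * ∏ c, X (i c)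
  have hT : T ∈ JbarIdeal k τ :=
    sum_mem fun p _ => Ideal.mul_mem_left _ _ (Ideal.subset_span ⟨d, fun c => p c, rfl⟩)
  have hexp : ∀ (p : Fin k → ℕ) (i : Fin (k + 1) → ℕ),
      τ ^ (-∑ c, m c * p c) * τ ^ (∑ c, ((p c : ℕ) : ℤ) * ((i c.succ : ℕ) : ℤ)) =
        ∏ c, (τ ^ ((i c.succ : ℤ) - m c)) ^ p c := by
    intro p i
    rw [← zpow_add₀ hτ0, ← sum_neg_distrib, ← sum_add_distrib, zpow_sum₀ hτ0]
    refine prod_congr rfl fun c _ => ?_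
    rw [← zpow_natCast, ← zpow_mul]
    ring_nf
  have hTeq : T = C ((q : ℂ) ^ k) *
      ∑ i ∈ A.filter (fun i => ∀ c, (q : ℤ) ∣ i c.succ - m c), ∏ c, X (i c) := by
    simp only [T, mul_sum, ← mul_assoc, ← C_mul, hexp]
    rw [sum_comm, sum_filter]
    refine sum_congr rfl fun i _ => ?_
    rw [← sum_mul, ← map_sum, hτ.sum_piFinset_prod_zpow_pow, Fintype.card_fin]
    split_ifs <;> simp
  have hqk : (q : ℂ) ^ k ≠ 0 := pow_ne_zero _ (Nat.cast_ne_zero.mpr hq.ne')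
  rw [← one_mul (∑ i ∈ _, _), ← C_1, ← inv_mul_cancel₀ hqk, C_mul, mul_assoc, ← hTeq]
  exact Ideal.mul_mem_left _ _ hT

lemma mk_prod_X_mem_span_of_spread_le {k q : ℕ} {τ : ℂ} (hτ : IsPrimitiveRoot τ q) (hq : 0 < q)
    (i₀ : Fin (k + 1) → ℕ) (hspread : ∀ c c', i₀ c ≤ i₀ c' + q) :
    Ideal.Quotient.mk (JbarIdeal k τ) (∏ c, X (i₀ c)) ∈ Submodule.span ℂ
      ((fun i : Fin (k + 1) → ℕ => Ideal.Quotient.mk (JbarIdeal k τ) (∏ c, X (i c))) ''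
        {i | ∑ c, i c = ∑ c, i₀ c ∧ ∑ c, i₀ c ^ 2 < ∑ c, i c ^ 2}) := by
  set F := (Nat.antidiagonalTuple (k + 1) (∑ c, i₀ c)).filter
    fun i => ∀ c : Fin k, (q : ℤ) ∣ i c.succ - i₀ c.succ
  have hF : ∑ i ∈ F, Ideal.Quotient.mk (JbarIdeal k τ) (∏ c, X (i c)) = 0 := by
    rw [← map_sum, Ideal.Quotient.eq_zero_iff_mem]
    exact sum_filter_dvd_mem_JbarIdeal hτ hq _ _
  have hi₀F : i₀ ∈ F := by simp [F, Nat.mem_antidiagonalTuple]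
  refine Submodule.span_mono ?_ (mem_span_image_of_sum_eq_zero
    (fun i => univ.val.map i = univ.val.map i₀) hF
    (fun i _ h => by rw [prod_X_eq_prod_X_of_map_eq h]) ⟨i₀, hi₀F, rfl⟩)
  rintro _ ⟨i, ⟨hiF, hne⟩, rfl⟩
  obtain ⟨hi, hdvd⟩ := mem_filter.mp hiF
  rw [Nat.mem_antidiagonalTuple] at hi
  refine ⟨i, ⟨hi, ?_⟩, rfl⟩
  -- the first coordinate is congruent too, since both tuples have the same sum
  have hdvd' : ∀ c, (q : ℤ) ∣ i c - i₀ c := by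
    have htot : ∑ c, ((i c : ℤ) - i₀ c) = 0 := by
      rw [sum_sub_distrib, sub_eq_zero]; exact_mod_cast hi
    refine Fin.cases ?_ hdvd
    rw [Fin.sum_univ_succ, add_eq_zero_iff_eq_neg] at htot
    rw [htot]
    exact (dvd_sum fun c _ => hdvd c).neg_right
  obtain ⟨c₀, -, hc₀⟩ := exists_min_image univ i₀ univ_nonempty
  have hne' : univ.val.map (fun c => (i₀ c : ℤ)) ≠ univ.val.map (fun c => (i c : ℤ)) := by
    intro h
    refine hne (Multiset.map_injective (Nat.cast_injective (R := ℤ)) ?_)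
    simpa only [Multiset.map_map, Function.comp_def] using h.symm
  have := sum_sq_lt_of_dvd_sub (m := i₀ c₀) (Int.natCast_pos.mpr hq)
    (fun c => ⟨by exact_mod_cast hc₀ c (mem_univ c), by exact_mod_cast hspread c c₀⟩) hdvd'
    (by exact_mod_cast hi.symm) hne'
  exact_mod_cast this

lemma mk_prod_map_X_mem_span_of_spread_le {k q : ℕ} {τ : ℂ} (hτ : IsPrimitiveRoot τ q)
    (hq : 0 < q) {t : Multiset ℕ} (ht : Multiset.card t = k + 1)
    (hspread : ∀ x ∈ t, ∀ y ∈ t, x ≤ y + q) :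
    Ideal.Quotient.mk (JbarIdeal k τ) (t.map X).prod ∈ Submodule.span ℂ
      {z | ∃ t' : Multiset ℕ, t'.sum = t.sum ∧ (t.map (· ^ 2)).sum < (t'.map (· ^ 2)).sum ∧
        z = Ideal.Quotient.mk (JbarIdeal k τ) (t'.map X).prod} := by
  obtain ⟨i₀, rfl⟩ := exists_fin_map_eq ht
  simp only [Multiset.map_map, Function.comp_def, ← prod_eq_multiset_prod, Finset.sum_map_val]
  refine Submodule.span_mono ?_ (mk_prod_X_mem_span_of_spread_le hτ hq i₀
    fun c c' => hspread _ (Multiset.mem_map_of_mem _ (mem_univ c)) _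
      (Multiset.mem_map_of_mem _ (mem_univ c')))
  rintro _ ⟨i, ⟨hsum, hsq⟩, rfl⟩
  refine ⟨univ.val.map i, ?_, ?_, ?_⟩ <;>
    simp only [Multiset.map_map, Function.comp_def, ← prod_eq_multiset_prod, Finset.sum_map_val,
      hsum, hsq]

lemma exists_antitone_admissible_or_exists_cluster (k r : ℕ) (s : Multiset ℕ) :
    (∃ (n : ℕ) (lam : Fin n → ℕ), Antitone lam ∧
      (∀ i : Fin n, ∀ h : (i : ℕ) + k < n, lam ⟨(i : ℕ) + k, h⟩ + r ≤ lam i) ∧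
      univ.val.map lam = s) ∨
    ∃ t ≤ s, Multiset.card t = k + 1 ∧ ∀ x ∈ t, ∀ y ∈ t, x < y + r := by
  set l := s.sort (· ≥ ·)
  have hl : l.SortedGE := List.sortedGE_iff_pairwise.mpr (Multiset.pairwise_sort _ _)
  by_cases hadm : ∀ a (h : a + k < l.length), l[a + k] + r ≤ l[a]
  · left
    exact ⟨l.length, l.get, hl.antitone_get, fun i h => hadm i h,
      by rw [Fin.univ_val_map, List.ofFn_get, Multiset.sort_eq]⟩
  · right
    push Not at hadm
    obtain ⟨a, ha, hlt⟩ := hadm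
    have hsub : ((l.drop a).take (k + 1)).Sublist l :=
      (List.take_sublist _ _).trans (List.drop_sublist _ _)
    refine ⟨(l.drop a).take (k + 1), ?_, by simp; omega, ?_⟩
    · rw [← Multiset.sort_eq s (· ≥ ·)]
      exact Multiset.coe_le.mpr hsub.subperm
    have hwin : ∀ x ∈ (l.drop a).take (k + 1), l[a + k] ≤ x ∧ x ≤ l[a] := by
      intro x hx
      obtain ⟨j, hj, rfl⟩ := List.mem_iff_getElem.mp hx
      simp only [List.length_take, List.length_drop] at hj
      simp only [List.getElem_take, List.getElem_drop]
      exact ⟨List.sortedGE_iff_getElem_ge_getElem_of_le.mp hl (by omega),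
        List.sortedGE_iff_getElem_ge_getElem_of_le.mp hl (by omega)⟩
    intro x hx y hy
    have := hwin x hx
    have := hwin y hy
    omega

noncomputable def admissibleSpan (k r : ℕ) (τ : ℂ) :
    Submodule ℂ (MvPolynomial ℕ ℂ ⧸ JbarIdeal k τ) :=
  Submodule.span ℂ
    {x : MvPolynomial ℕ ℂ ⧸ JbarIdeal k τ | ∃ (n : ℕ) (lam : Fin n → ℕ),
      Antitone lam ∧
      (∀ i : Fin n, ∀ h : (i : ℕ) + k < n, lam ⟨(i : ℕ) + k, h⟩ + r ≤ lam i) ∧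
      x = Ideal.Quotient.mk (JbarIdeal k τ) (∏ i : Fin n, MvPolynomial.X (lam i))}

lemma mk_prod_map_X_mem_admissibleSpan {k r : ℕ} {τ : ℂ} (hr : 2 ≤ r)
    (hτ : IsPrimitiveRoot τ (r - 1)) (s : Multiset ℕ) :
    Ideal.Quotient.mk (JbarIdeal k τ) (s.map X).prod ∈ admissibleSpan k r τ := by
  induction hN : s.sum ^ 2 - (s.map (· ^ 2)).sum using Nat.strong_induction_on generalizing s
    with | _ N ih
  rcases exists_antitone_admissible_or_exists_cluster k r s with
    ⟨n, lam, hanti, hadm, rfl⟩ | ⟨t, hts, hcard, hspread⟩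
  · refine Submodule.subset_span ⟨n, lam, hanti, hadm, ?_⟩
    rw [Multiset.map_map, Function.comp_def, ← prod_eq_multiset_prod]
  obtain ⟨u, rfl⟩ := Multiset.le_iff_exists_add.mp hts
  have hkey := mk_prod_map_X_mem_span_of_spread_le hτ (by omega) hcard
    fun x hx y hy => by have := hspread x hx y hy; omega
  set π := Ideal.Quotient.mk (JbarIdeal k τ)
  have hmul : π (u.map X).prod * π (t.map X).prod ∈ admissibleSpan k r τ := by
    refine (Submodule.map_span_le (LinearMap.mulLeft ℂ (π (u.map X).prod)) _ _).mpr ?_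
      (Submodule.mem_map_of_mem hkey)
    rintro _ ⟨t', hsum, hsq, rfl⟩
    rw [LinearMap.mulLeft_apply, ← map_mul, ← Multiset.prod_add, ← Multiset.map_add, add_comm u]
    refine ih _ ?_ (t' + u) rfl
    have hbound := sum_map_sq_le_sq_sum (t' + u)
    simp only [Multiset.sum_add, Multiset.map_add, hsum] at hbound hN ⊢
    omega
  rwa [← map_mul, ← Multiset.prod_add, ← Multiset.map_add, add_comm u] at hmul

theorem stmt6_general (k r : ℕ) (hr : 2 ≤ r) (τ : ℂ)
    (hτ : IsPrimitiveRoot τ (r - 1)) :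
    Submodule.span ℂ
      {x : MvPolynomial ℕ ℂ ⧸ JbarIdeal k τ | ∃ (n : ℕ) (lam : Fin n → ℕ),
        Antitone lam ∧
        (∀ i : Fin n, ∀ h : (i : ℕ) + k < n, lam ⟨(i : ℕ) + k, h⟩ + r ≤ lam i) ∧
        x = Ideal.Quotient.mk (JbarIdeal k τ) (∏ i : Fin n, MvPolynomial.X (lam i))} = ⊤ := by
  change admissibleSpan k r τ = ⊤
  have hspan := congr_arg (Submodule.map (Ideal.Quotient.mkₐ ℂ (JbarIdeal k τ)).toLinearMap)
    (span_range_prod_map_X_eq_top (σ := ℕ) (R := ℂ))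
  rw [Submodule.map_span, Submodule.map_top, LinearMap.range_eq_top.mpr
    (Ideal.Quotient.mkₐ_surjective ℂ _), ← Set.range_comp] at hspan
  rw [eq_top_iff, ← hspan, Submodule.span_le]
  rintro _ ⟨s, rfl⟩
  exact mk_prod_map_X_mem_admissibleSpan hr hτ s

/-- the residue classes of the monomials `e_λ = e_{λ_1}⋯e_{λ_n}`,
for `λ` ranging over all (k,r,n)-admissible partitions over all `n ≥ 0`, span
the quotient `R̄/J̄` as a ℂ-vector space. -/
theorem stmt6 (k r : ℕ) (hk : 1 ≤ k) (hr : 2 ≤ r) (τ : ℂ)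
    (hτ : IsPrimitiveRoot τ (r - 1)) :
    Submodule.span ℂ
      {x : MvPolynomial ℕ ℂ ⧸ JbarIdeal k τ | ∃ (n : ℕ) (lam : Fin n → ℕ),
        Antitone lam ∧
        (∀ i : Fin n, ∀ h : (i : ℕ) + k < n, lam ⟨(i : ℕ) + k, h⟩ + r ≤ lam i) ∧
        x = Ideal.Quotient.mk (JbarIdeal k τ) (∏ i : Fin n, MvPolynomial.X (lam i))} = ⊤ :=
  stmt6_general k r hr τ hτ
end

section
/- Fix integers k ≥ 1, r ≥ 2, and integers 1 ≤ b_0 ≤ b_1 ≤ … ≤ b_{r−2} ≤ k. Then for all integers n, d ≥ 0: the number of sequences a ∈ 𝒞_{b_0,b_1,…,b_{r−2}} with ∑_i a_i = n and ∑_i i·a_i = d equals the number of sequences a ∈ 𝒞_{b_0−1,b_1,…,b_{r−2}} with ∑_i a_i = n and ∑_i i·a_i = d, plus the number of sequences a ∈ 𝒞_{b_1−b_0, b_2−b_0, …, b_{r−2}−b_0, k−b_0} with ∑_i a_i = n − b_0 and ∑_i i·a_i = d − n + b_0. -/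
/-- Membership in the set `𝒞_{c_0,…,c_{r−2}}`: a finitely supported sequence
`a` with `a_i + ⋯ + a_{i+r−1} ≤ k` for all `i ≥ 0` and `a_0 + ⋯ + a_i ≤ c_i`
for `0 ≤ i ≤ r−2`. -/
def CCond (k r : ℕ) (c : Fin (r - 1) → ℕ) (a : ℕ →₀ ℕ) : Prop :=
  (∀ i : ℕ, ∑ j ∈ Finset.range r, a (i + j) ≤ k) ∧
    ∀ i : Fin (r - 1), ∑ j ∈ Finset.range ((i : ℕ) + 1), a j ≤ c i

/-!
Split `𝒞_{b_0,…,b_{r−2}}` according to whether `a_0 < b_0` or `a_0 = b_0`. The sequences with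
`a_0 < b_0` are exactly those of `𝒞_{b_0−1,b_1,…,b_{r−2}}`. A sequence with `a_0 = b_0` is `b_0`
followed by a tail `t`; its prefix constraints become `t_0 + ⋯ + t_i ≤ b_{i+1} − b_0`, its first
window constraint becomes `t_0 + ⋯ + t_{r−2} ≤ k − b_0`, and its later windows are those of `t`,
so `t ∈ 𝒞_{b_1−b_0,…,b_{r−2}−b_0,k−b_0}`. Removing the leading `b_0` lowers `∑ a_i` by `b_0`
and `∑ i a_i` by `∑ t_i = n − b_0`.
-/

open Finset

namespace Finsupp

section Zero

variable {M : Type*} [Zero M]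

noncomputable def natCons (x : M) (t : ℕ →₀ M) : ℕ →₀ M :=
  onFinset (insert 0 (t.support.map ⟨Nat.succ, Nat.succ_injective⟩))
    (fun | 0 => x | i + 1 => t i)
    (fun i hi => by cases i <;> simp_all)

noncomputable def natTail (a : ℕ →₀ M) : ℕ →₀ M :=
  a.comapDomain Nat.succ Nat.succ_injective.injOn

variable (x : M) (t a : ℕ →₀ M)

@[simp] theorem natCons_zero : natCons x t 0 = x := rfl

@[simp] theorem natCons_succ (i : ℕ) : natCons x t (i + 1) = t i := rfl

@[simp] theorem natTail_apply (i : ℕ) : natTail a i = a (i + 1) := rfl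

theorem natTail_natCons : natTail (natCons x t) = t := by
  ext i; simp

theorem natCons_natTail : natCons (a 0) (natTail a) = a := by
  ext (_ | i) <;> simp

theorem support_natCons_subset :
    (natCons x t).support ⊆ insert 0 (t.support.map ⟨Nat.succ, Nat.succ_injective⟩) :=
  support_onFinset_subset

theorem sum_natCons {N : Type*} [AddCommMonoid N] (f : ℕ → M → N) (hf : ∀ i, f i 0 = 0) :
    (natCons x t).sum f = f 0 x + t.sum fun i => f (i + 1) := by
  rw [sum_of_support_subset _ (support_natCons_subset x t) f fun i _ => hf i,
    sum_insert (by simp), sum_map]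
  rfl

noncomputable def natConsEquiv (p : (ℕ →₀ M) → Prop) :
    {t // p (natCons x t)} ≃ {a // p a ∧ a 0 = x} where
  toFun t := ⟨natCons x t, t.2, rfl⟩
  invFun a := ⟨natTail a, by obtain ⟨a, ha, rfl⟩ := a; rwa [natCons_natTail]⟩
  left_inv t := Subtype.ext (natTail_natCons x t)
  right_inv a := by obtain ⟨a, ha, rfl⟩ := a; exact Subtype.ext (natCons_natTail a)

end Zero

section AddCommMonoid

variable {M : Type*} [AddCommMonoid M] (x : M) (t : ℕ →₀ M)

theorem sum_range_succ_natCons (m : ℕ) :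
    ∑ j ∈ range (m + 1), natCons x t j = x + ∑ j ∈ range m, t j := by
  rw [sum_range_succ', add_comm]
  rfl

theorem sum_range_natCons_add_succ (i m : ℕ) :
    ∑ j ∈ range m, natCons x t (i + 1 + j) = ∑ j ∈ range m, t (i + j) := by
  simp only [Nat.add_right_comm i 1, natCons_succ]

end AddCommMonoid

theorem sum_mul_natCons (x : ℕ) (t : ℕ →₀ ℕ) :
    (natCons x t).sum (fun i y => i * y) = t.sum (fun i y => i * y) + t.sum (fun _ y => y) := by
  rw [sum_natCons _ _ _ fun _ => mul_zero _, zero_mul, zero_add, ← sum_add]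
  simp only [add_mul, one_mul]

theorem le_sum_mul_of_mem_support {a : ℕ →₀ ℕ} {i : ℕ} (hi : i ∈ a.support) :
    i ≤ a.sum fun j y => j * y :=
  calc i ≤ i * a i := Nat.le_mul_of_pos_right i (Nat.pos_of_ne_zero (mem_support_iff.mp hi))
    _ ≤ a.sum fun j y => j * y :=
      Finset.single_le_sum (f := fun j => j * a j) (fun _ _ => Nat.zero_le _) hi

theorem finite_setOf_sum_eq_and_sum_mul_eq (n d : ℕ) :
    {a : ℕ →₀ ℕ | a.sum (fun _ y => y) = n ∧ a.sum (fun i y => i * y) = d}.Finite := by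
  refine (finsuppAntidiag (range (d + 1)) n).finite_toSet.subset ?_
  rintro a ⟨hn, hd⟩
  have hsupp : a.support ⊆ range (d + 1) := fun i hi =>
    mem_range_succ_iff.mpr (hd ▸ le_sum_mul_of_mem_support hi)
  exact mem_finsuppAntidiag.mpr ⟨(sum_of_support_subset a hsupp _ fun _ _ => rfl).symm.trans hn,
    hsupp⟩

end Finsupp

theorem Nat.card_subtype_and_add_card_subtype_and_not {α : Type*} (p q : α → Prop)
    [Finite {a // p a}] :
    Nat.card {a // p a ∧ q a} + Nat.card {a // p a ∧ ¬q a} = Nat.card {a // p a} :=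
  Set.ncard_inter_add_ncard_sdiff_eq_ncard {a | p a} {a | q a}
    (Set.finite_coe_iff.mp ‹Finite {a // p a}›)

open Finsupp

theorem cCond_update_pred_iff {k r : ℕ} {c : Fin (r - 1) → ℕ} {a : ℕ →₀ ℕ} (z : Fin (r - 1))
    (hz : 1 ≤ c z) :
    CCond k r (Function.update c z (c z - 1)) a ↔
      CCond k r c a ∧ ∑ j ∈ range (z + 1), a j ≠ c z := by
  simp only [CCond]
  constructor
  · rintro ⟨hwin, hpre⟩
    refine ⟨⟨hwin, fun i => ?_⟩, ?_⟩
    · rcases eq_or_ne i z with rfl | hi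
      · have := hpre i
        rw [Function.update_self] at this
        omega
      · simpa only [Function.update_of_ne hi] using hpre i
    · have := hpre z
      rw [Function.update_self] at this
      omega
  · rintro ⟨⟨hwin, hpre⟩, hne⟩
    refine ⟨hwin, fun i => ?_⟩
    rcases eq_or_ne i z with rfl | hi
    · rw [Function.update_self]
      have := hpre i
      omega
    · rw [Function.update_of_ne hi]
      exact hpre i

theorem cCond_natCons_iff {k r : ℕ} (hr : 0 < r - 1) {b : Fin (r - 1) → ℕ}
    (hmin : ∀ i, b ⟨0, hr⟩ ≤ b i) (hk : b ⟨0, hr⟩ ≤ k) (t : ℕ →₀ ℕ) :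
    CCond k r b (natCons (b ⟨0, hr⟩) t) ↔
      CCond k r (fun i : Fin (r - 1) =>
        if h : (i : ℕ) + 1 < r - 1 then b ⟨(i : ℕ) + 1, h⟩ - b ⟨0, hr⟩
        else k - b ⟨0, hr⟩) t := by
  have window_zero : ∑ j ∈ range r, natCons (b ⟨0, hr⟩) t (0 + j) =
      b ⟨0, hr⟩ + ∑ j ∈ range (r - 1), t j := by
    have := sum_range_succ_natCons (b ⟨0, hr⟩) t (r - 1)
    rw [Nat.sub_add_cancel (by omega)] at this
    simpa only [zero_add] using this
  simp only [CCond]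
  constructor
  · rintro ⟨hwin, hpre⟩
    refine ⟨fun i => by simpa only [sum_range_natCons_add_succ] using hwin (i + 1), fun j => ?_⟩
    split_ifs with h
    · have := hpre ⟨j + 1, h⟩
      simp only [sum_range_succ_natCons] at this
      omega
    · rw [show (j : ℕ) + 1 = r - 1 by omega]
      have := hwin 0
      rw [window_zero] at this
      omega
  · rintro ⟨hwin, hpre⟩
    refine ⟨fun i => ?_, fun i => ?_⟩
    · cases i with
      | zero =>
        have := hpre ⟨r - 2, by omega⟩
        simp only [show r - 2 + 1 = r - 1 by omega, lt_irrefl, dite_false] at this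
        rw [window_zero]
        omega
      | succ i => rw [sum_range_natCons_add_succ]; exact hwin i
    · obtain ⟨_ | j, hj⟩ := i
      · simp
      · have := hpre ⟨j, by omega⟩
        simp only [show j + 1 < r - 1 by omega, dite_true] at this
        rw [Fin.val_mk, sum_range_succ_natCons]
        have := hmin ⟨j + 1, hj⟩
        omega

/-- the recursion
`χ^𝒞_{b_0,…,b_{r−2}} = χ^𝒞_{b_0−1,b_1,…,b_{r−2}} + z^{b_0} χ^𝒞_{b_1−b_0,…,b_{r−2}−b_0,k−b_0}(v,vz)`,
stated coefficientwise: the number of `a ∈ 𝒞_{b_0,…,b_{r−2}}` with `∑ a_i = n`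
and `∑ i·a_i = d` is the number of such `a ∈ 𝒞_{b_0−1,b_1,…,b_{r−2}}` plus the
number of `a ∈ 𝒞_{b_1−b_0,…,b_{r−2}−b_0,k−b_0}` with `∑ a_i = n − b_0` and
`∑ i·a_i = d − n + b_0` (the latter two equations written without natural
subtraction). -/
theorem stmt10 (k r : ℕ) (hr : 2 ≤ r)
    (b : Fin (r - 1) → ℕ) (hb : Monotone b) (hbk : ∀ i, b i ≤ k)
    (hb0 : 1 ≤ b ⟨0, by omega⟩) (n d : ℕ) :
    Nat.card {a : ℕ →₀ ℕ // CCond k r b a ∧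
        a.sum (fun _ x => x) = n ∧ a.sum (fun i x => i * x) = d} =
      Nat.card {a : ℕ →₀ ℕ //
          CCond k r (Function.update b ⟨0, by omega⟩ (b ⟨0, by omega⟩ - 1)) a ∧
          a.sum (fun _ x => x) = n ∧ a.sum (fun i x => i * x) = d} +
      Nat.card {a : ℕ →₀ ℕ //
          CCond k r
            (fun i : Fin (r - 1) =>
              if h : (i : ℕ) + 1 < r - 1 then b ⟨(i : ℕ) + 1, h⟩ - b ⟨0, by omega⟩
              else k - b ⟨0, by omega⟩) a ∧
          a.sum (fun _ x => x) + b ⟨0, by omega⟩ = n ∧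
          a.sum (fun i x => i * x) + n = d + b ⟨0, by omega⟩} := by
  have : Finite {a : ℕ →₀ ℕ // CCond k r b a ∧
      a.sum (fun _ x => x) = n ∧ a.sum (fun i x => i * x) = d} :=
    ((finite_setOf_sum_eq_and_sum_mul_eq n d).subset fun _ ha => ha.2).to_subtype
  rw [← Nat.card_subtype_and_add_card_subtype_and_not _ fun a => a 0 = b ⟨0, by omega⟩,
    add_comm]
  congr 1
  · refine Nat.card_congr (Equiv.subtypeEquivRight fun a => ?_)
    rw [cCond_update_pred_iff _ hb0, sum_range_one]
    tauto
  · refine Nat.card_congr ((natConsEquiv _ _).symm.trans (Equiv.subtypeEquivRight fun t => ?_))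
    rw [cCond_natCons_iff (by omega) (fun i => hb (Nat.zero_le _)) (hbk _),
      sum_natCons _ _ _ fun _ => rfl, sum_mul_natCons]
    constructor <;> rintro ⟨hc, hn, hd⟩ <;> exact ⟨hc, by omega, by omega⟩
end

section
/- Let k ≥ 1 and r ≥ 2 be integers, m = gcd(k+1, r−1), fix ω₁ ∈ ℂ such that ω₁^{(r−1)/m} is a primitive m-th root of unity, and in K = ℂ(u) set t = u^{(r−1)/m} and q = ω₁ u^{−(k+1)/m}. Let T : R → R be the K-algebra endomorphism determined by T(e_i) = e_{i+1}. Then for every tuple of integers 1 ≤ b_0 ≤ b_1 ≤ … ≤ b_{r−2} ≤ k, one has the equality of K-subspaces of R: I_{b_0−1, b_1, …, b_{r−2}} = I_{b_0, b_1, …, b_{r−2}} + e_0^{b_0} · T(R), where e_0^{b_0} · T(R) = { e_0^{b_0} T(g) : g ∈ R }. Equivalently, the sequence W_{b_1−b_0,…,b_{r−2}−b_0,k−b_0} → W_{b_0,…,b_{r−2}} → W_{b_0−1,b_1,…,b_{r−2}} → 0, with first map induced by g ↦ e_0^{b_0} T(g) and second map the canonical surjection, is exact. -/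
open MvPolynomial

/-- The ideal `I_{c_0,…,c_{r−2}}` of `R = K[e_0,e_1,…]`. -/
noncomputable def Wideal (k r : ℕ) (q t : RatFunc ℂ) (c : Fin (r - 1) → ℕ) :
    Ideal (MvPolynomial ℕ (RatFunc ℂ)) :=
  Ideal.span
    ({g : MvPolynomial ℕ (RatFunc ℂ) | ∃ (d : ℕ) (σ : Fin k → ℕ),
        Monotone σ ∧ (∀ j, σ j ≤ r - 1) ∧
        g = ∑ i ∈ Finset.Nat.antidiagonalTuple (k + 1) d,
          MvPolynomial.C (∏ j : Fin k, (t ^ ((j : ℕ) + 1) * q ^ (σ j)) ^ (i j.succ)) *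
            ∏ c' : Fin (k + 1), MvPolynomial.X (i c')} ∪
      {g : MvPolynomial ℕ (RatFunc ℂ) | ∃ a : Fin (r - 1) → ℕ,
        (∃ i : Fin (r - 1),
          c i < ∑ j ∈ Finset.univ.filter (fun j : Fin (r - 1) => j ≤ i), a j) ∧
        g = ∏ j : Fin (r - 1), MvPolynomial.X ((j : ℕ)) ^ a j})

/-- The shift endomorphism `T : R → R`, `T(e_i) = e_{i+1}`. -/
noncomputable def shiftT :
    MvPolynomial ℕ (RatFunc ℂ) →ₐ[RatFunc ℂ] MvPolynomial ℕ (RatFunc ℂ) :=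
  MvPolynomial.aeval fun i : ℕ => MvPolynomial.X (i + 1)

/-- the equality of subspaces
`I_{b_0−1,b_1,…,b_{r−2}} = I_{b_0,…,b_{r−2}} + e_0^{b_0}·T(R)`, i.e.
exactness of
`W_{b_1−b_0,…,k−b_0} → W_{b_0,…,b_{r−2}} → W_{b_0−1,b_1,…,b_{r−2}} → 0`. -/
theorem stmt12 (k r : ℕ) (hk : 1 ≤ k) (hr : 2 ≤ r)
    (m : ℕ) (hm : m = Nat.gcd (k + 1) (r - 1))
    (ω₁ : ℂ) (hω : IsPrimitiveRoot (ω₁ ^ ((r - 1) / m)) m)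
    (t q : RatFunc ℂ)
    (ht : t = RatFunc.X ^ ((r - 1) / m))
    (hq : q = RatFunc.C ω₁ * RatFunc.X ^ (-(((k + 1) / m : ℕ) : ℤ)))
    (b : Fin (r - 1) → ℕ) (hb : Monotone b) (hbk : ∀ i, b i ≤ k)
    (hb0 : 1 ≤ b ⟨0, by omega⟩) :
    ∀ x : MvPolynomial ℕ (RatFunc ℂ),
      x ∈ Wideal k r q t (Function.update b ⟨0, by omega⟩ (b ⟨0, by omega⟩ - 1)) ↔
      ∃ y ∈ Wideal k r q t b, ∃ g : MvPolynomial ℕ (RatFunc ℂ),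
        x = y + MvPolynomial.X 0 ^ (b ⟨0, by omega⟩) * shiftT g := by
  have hr1 : 0 < r - 1 := by omega
  set z : Fin (r - 1) := ⟨0, hr1⟩ with hzdef
  have hzval : (z : ℕ) = 0 := rfl
  set c : Fin (r - 1) → ℕ := Function.update b z (b z - 1) with hcdef
  have hcz : c z = b z - 1 := Function.update_self z _ b
  have hcne : ∀ i, i ≠ z → c i = b i := fun i hi => Function.update_of_ne hi _ _
  have hcle : ∀ i, c i ≤ b i := by
    intro i
    by_cases h : i = z
    · subst h; rw [hcz]; omega
    · rw [hcne i h]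
  have hb0' : 1 ≤ b z := hb0
  -- filter at bottom element
  have hfilter : Finset.univ.filter (fun j : Fin (r - 1) => j ≤ z) = {z} := by
    ext j
    simp only [Finset.mem_filter, Finset.mem_univ, true_and, Finset.mem_singleton,
      Fin.le_def, Fin.ext_iff]
    omega
  -- monotonicity of the ideal
  have hmono : Wideal k r q t b ≤ Wideal k r q t c := by
    apply Ideal.span_mono
    intro g hg
    rcases hg with h | h
    · exact Or.inl h
    · obtain ⟨a, ⟨i, hi⟩, hgeq⟩ := h
      exact Or.inr ⟨a, ⟨i, lt_of_le_of_lt (hcle i) hi⟩, hgeq⟩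
  -- powers of X 0 as generators
  have hXmem : ∀ (c' : Fin (r - 1) → ℕ) (pow : ℕ), c' z < pow →
      (X 0 : MvPolynomial ℕ (RatFunc ℂ)) ^ pow ∈ Wideal k r q t c' := by
    intro c' pow hpow
    apply Ideal.subset_span
    refine Or.inr ⟨fun j => if j = z then pow else 0, ⟨z, ?_⟩, ?_⟩
    · rw [hfilter, Finset.sum_singleton, if_pos rfl]; exact hpow
    · rw [Finset.prod_eq_single z]
      · simp [hzval]
      · intro j _ hj; simp only [if_neg hj, pow_zero]
      · intro h; exact absurd (Finset.mem_univ z) h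
  have hshX : ∀ n, shiftT (X n) = (X (n + 1) : MvPolynomial ℕ (RatFunc ℂ)) := by
    intro n; simp [shiftT]
  have hshC : ∀ a : RatFunc ℂ, shiftT (C a) = (C a : MvPolynomial ℕ (RatFunc ℂ)) := by
    intro a; simp [shiftT]
  -- closure under multiplication
  have key : ∀ f g : MvPolynomial ℕ (RatFunc ℂ),
      ∃ y ∈ Wideal k r q t b, ∃ g' : MvPolynomial ℕ (RatFunc ℂ),
        f * (X 0 ^ (b z) * shiftT g) = y + X 0 ^ (b z) * shiftT g' := by
    intro f
    induction f using MvPolynomial.induction_on with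
    | C a =>
      intro g
      refine ⟨0, Ideal.zero_mem _, C a * g, ?_⟩
      rw [map_mul, hshC]; ring
    | add p1 p2 hp1 hp2 =>
      intro g
      obtain ⟨y1, hy1, g1, hg1⟩ := hp1 g
      obtain ⟨y2, hy2, g2, hg2⟩ := hp2 g
      refine ⟨y1 + y2, add_mem hy1 hy2, g1 + g2, ?_⟩
      rw [add_mul, hg1, hg2, map_add]; ring
    | mul_X p n hp =>
      intro g
      obtain ⟨y, hy, g', hg'⟩ := hp g
      cases n with
      | zero =>
        refine ⟨X 0 * y + X 0 ^ (b z + 1) * shiftT g', ?_, 0, ?_⟩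
        · exact add_mem (Ideal.mul_mem_left _ _ hy)
            (Ideal.mul_mem_right _ _ (hXmem b (b z + 1) (Nat.lt_succ_self _)))
        · rw [map_zero, mul_zero, add_zero]
          calc p * X 0 * (X 0 ^ b z * shiftT g)
              = X 0 * (p * (X 0 ^ b z * shiftT g)) := by ring
            _ = X 0 * (y + X 0 ^ b z * shiftT g') := by rw [hg']
            _ = _ := by ring
      | succ n' =>
        refine ⟨X (n' + 1) * y, Ideal.mul_mem_left _ _ hy, X n' * g', ?_⟩
        rw [map_mul, hshX]
        calc p * X (n' + 1) * (X 0 ^ b z * shiftT g)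
            = X (n' + 1) * (p * (X 0 ^ b z * shiftT g)) := by ring
          _ = X (n' + 1) * (y + X 0 ^ b z * shiftT g') := by rw [hg']
          _ = _ := by ring
  -- the target ideal
  let J : Ideal (MvPolynomial ℕ (RatFunc ℂ)) :=
    { carrier := {x | ∃ y ∈ Wideal k r q t b, ∃ g : MvPolynomial ℕ (RatFunc ℂ),
        x = y + X 0 ^ (b z) * shiftT g}
      zero_mem' := ⟨0, Ideal.zero_mem _, 0, by simp⟩
      add_mem' := by
        rintro x1 x2 ⟨y1, hy1, g1, rfl⟩ ⟨y2, hy2, g2, rfl⟩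
        exact ⟨y1 + y2, add_mem hy1 hy2, g1 + g2, by rw [map_add]; ring⟩
      smul_mem' := by
        rintro f x ⟨y, hy, g, rfl⟩
        obtain ⟨y2, hy2, g2, hg2⟩ := key f g
        refine ⟨f * y + y2, add_mem (Ideal.mul_mem_left _ _ hy) hy2, g2, ?_⟩
        simp only [smul_eq_mul]
        rw [mul_add, hg2, add_assoc]
      }
  have hfwd : Wideal k r q t c ≤ J := by
    rw [Wideal]
    rw [Ideal.span_le]
    rintro g (h | h)
    · exact ⟨g, Ideal.subset_span (Or.inl h), 0, by simp⟩
    · obtain ⟨a, ⟨i, hi⟩, rfl⟩ := h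
      by_cases hcase : ∃ i' : Fin (r - 1),
          b i' < ∑ j ∈ Finset.univ.filter (fun j : Fin (r - 1) => j ≤ i'), a j
      · exact ⟨_, Ideal.subset_span (Or.inr ⟨a, hcase, rfl⟩), 0, by simp⟩
      · push_neg at hcase
        have hiz : i = z := by
          by_contra hne
          rw [hcne i hne] at hi
          exact absurd hi (not_lt.mpr (hcase i))
        subst hiz
        rw [hfilter, Finset.sum_singleton] at hi
        have haz : a z = b z := by
          have h1 := hcase z
          rw [hfilter, Finset.sum_singleton] at h1
          rw [hcz] at hi
          omega
        refine ⟨0, Ideal.zero_mem _, ∏ j ∈ Finset.univ.erase z, X ((j : ℕ) - 1) ^ a j, ?_⟩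
        rw [zero_add, map_prod]
        have hterm : ∀ j ∈ Finset.univ.erase z,
            shiftT (X ((j : ℕ) - 1) ^ a j) = (X ((j : ℕ)) : MvPolynomial ℕ (RatFunc ℂ)) ^ a j := by
          intro j hj
          rw [map_pow, hshX]
          have hjne : (j : ℕ) ≠ 0 := by
            intro h
            exact (Finset.mem_erase.mp hj).1 (Fin.ext (h.trans hzval.symm))
          congr 2
          omega
        rw [Finset.prod_congr rfl hterm,
          ← Finset.mul_prod_erase Finset.univ _ (Finset.mem_univ z), hzval, haz]
  intro x
  constructor
  · intro hx
    exact hfwd hx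
  · rintro ⟨y, hy, g, rfl⟩
    exact add_mem (hmono hy) (Ideal.mul_mem_right _ _ (hXmem c (b z) (by omega)))
end

section
/- Fix integers k ≥ 1 and r ≥ 2. For an integer d ≥ 0 and a tuple ν = (ν_0, ν_1, …, ν_{r−2}) of nonnegative integers with ν_0 + … + ν_{r−2} = k+1, let K_d(ν) be the set of partitions μ = (μ_1 ≥ μ_2 ≥ … ≥ μ_{k+1} ≥ 0) with μ_1 + … + μ_{k+1} = d such that for each 0 ≤ a ≤ r−2, the number of indices i with μ_i ≡ a (mod r−1) equals ν_a. Then if K_d(ν) is nonempty, it contains exactly one element λ satisfying λ_1 − λ_{k+1} ≤ r−1; moreover every μ ∈ K_d(ν) with μ ≠ λ is strictly greater than λ in the lexicographic order (i.e. there exists i with μ_1 = λ_1, …, μ_{i−1} = λ_{i−1} and μ_i > λ_i). -/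
open Finset

/-- residue representatives in the window `[c, c+m)`. -/
lemma exists_rep (m c : ℕ) (hm : 0 < m) :
    ∃ v : ℕ → ℕ, (∀ ρ, ρ < m → v ρ % m = ρ) ∧ (∀ ρ, ρ < m → c ≤ v ρ ∧ v ρ < c + m) := by
  refine ⟨fun ρ => c + (ρ + m - c % m) % m, ?_, ?_⟩
  · intro ρ hρ
    have h1 : c % m < m := Nat.mod_lt _ hm
    have h4 := Nat.div_add_mod c m
    have h3 : c + (ρ + m - c % m) = m * (c / m) + (ρ + m) := by omega
    calc (c + (ρ + m - c % m) % m) % m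
        = (c + (ρ + m - c % m)) % m := Nat.add_mod_mod _ _ _
      _ = (m * (c / m) + (ρ + m)) % m := by rw [h3]
      _ = (ρ + m) % m := Nat.mul_add_mod _ _ _
      _ = ρ % m := Nat.add_mod_right _ _
      _ = ρ := Nat.mod_eq_of_lt hρ
  · intro ρ hρ
    have h1 : (ρ + m - c % m) % m < m := Nat.mod_lt _ hm
    refine ⟨Nat.le_add_right _ _, ?_⟩
    show c + (ρ + m - c % m) % m < c + m
    omega

lemma card_filter_comp_perm {n : ℕ} (e : Equiv.Perm (Fin n)) (p : Fin n → Prop)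
    [DecidablePred p] :
    (Finset.univ.filter fun t => p (e t)).card = (Finset.univ.filter p).card := by
  apply Finset.card_bij (fun t _ => e t)
  · intro a ha
    simp only [Finset.mem_filter, Finset.mem_univ, true_and] at *
    exact ha
  · intro a _ b _ h
    exact e.injective h
  · intro b hb
    refine ⟨e.symm b, ?_, by simp⟩
    simp only [Finset.mem_filter, Finset.mem_univ, true_and, Equiv.apply_symm_apply] at *
    exact hb

/-- Key lemma B: an element with spread ≤ m is lexicographically below
every other element with the same sum and residue counts. -/
lemma bprime (n m : ℕ) (hm : 0 < m) (lam mu : Fin (n + 1) → ℕ)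
    (hlam : Antitone lam) (hmu : Antitone mu)
    (hsum : ∑ t, mu t = ∑ t, lam t)
    (hcnt : ∀ ρ, ρ < m →
      (Finset.univ.filter fun t => mu t % m = ρ).card =
      (Finset.univ.filter fun t => lam t % m = ρ).card)
    (hsp : lam 0 ≤ lam (Fin.last n) + m)
    (hne : mu ≠ lam) :
    ∃ i, (∀ j, j < i → mu j = lam j) ∧ lam i < mu i := by
  classical
  obtain ⟨t0, ht0⟩ := Function.ne_iff.mp hne
  set S : Finset (Fin (n + 1)) := Finset.univ.filter (fun t => mu t ≠ lam t) with hS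
  have hSne : S.Nonempty := ⟨t0, by simp [hS, ht0]⟩
  set i := S.min' hSne with hidef
  have hiS : i ∈ S := S.min'_mem hSne
  have hi : mu i ≠ lam i := by
    have := Finset.mem_filter.mp hiS
    exact this.2
  have hpre : ∀ j, j < i → mu j = lam j := by
    intro j hj
    by_contra hjne
    have hjS : j ∈ S := by simp [hS, hjne]
    exact absurd (S.min'_le j hjS) (not_le.mpr hj)
  rcases lt_trichotomy (lam i) (mu i) with h | h | h
  · exact ⟨i, hpre, h⟩
  · exact absurd h.symm hi
  · exfalso
    set c := lam (Fin.last n) with hc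
    have hcle : ∀ t, c ≤ lam t := fun t => hlam (Fin.le_last t)
    have hlami : lam i ≤ c + m := le_trans (hlam (Fin.zero_le i)) hsp
    obtain ⟨v, hv1, hv2⟩ := exists_rep m c hm
    have P1 : ∀ x, c ≤ x → v (x % m) ≤ x := by
      intro x hx
      have hρ : x % m < m := Nat.mod_lt _ hm
      have hmod : v (x % m) % m = x % m := hv1 _ hρ
      by_contra hcon
      push_neg at hcon
      have hcong : x ≡ v (x % m) [MOD m] := by
        unfold Nat.ModEq
        rw [hmod]
      have hdvd : m ∣ v (x % m) - x := (Nat.modEq_iff_dvd' (le_of_lt hcon)).mp hcong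
      obtain ⟨q, hq⟩ := hdvd
      have hq0 : q ≠ 0 := by
        intro h0
        rw [h0, Nat.mul_zero] at hq
        omega
      have hmq : m ≤ m * q := Nat.le_mul_of_pos_right m (Nat.pos_of_ne_zero hq0)
      have h1 : m ≤ v (x % m) - x := by omega
      have h2 := (hv2 _ hρ).2
      omega
    have P2 : ∀ x, x < c + m → x ≤ v (x % m) := by
      intro x hx
      have hρ : x % m < m := Nat.mod_lt _ hm
      have hmod : v (x % m) % m = x % m := hv1 _ hρ
      by_contra hcon
      push_neg at hcon
      have hcong : v (x % m) ≡ x [MOD m] := by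
        unfold Nat.ModEq
        rw [hmod]
      have hdvd : m ∣ x - v (x % m) := (Nat.modEq_iff_dvd' (le_of_lt hcon)).mp hcong
      obtain ⟨q, hq⟩ := hdvd
      have hq0 : q ≠ 0 := by
        intro h0
        rw [h0, Nat.mul_zero] at hq
        omega
      have hmq : m ≤ m * q := Nat.le_mul_of_pos_right m (Nat.pos_of_ne_zero hq0)
      have h1 : m ≤ x - v (x % m) := by omega
      have h2 := (hv2 _ hρ).1
      omega
    set T : Finset (Fin (n + 1)) := Finset.univ.filter (fun t => ¬ t < i) with hT
    have hiT : i ∈ T := by simp [hT]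
    have hTle : ∀ t ∈ T, i ≤ t := by
      intro t ht
      have := (Finset.mem_filter.mp ht).2
      exact not_lt.mp this
    have hsplit : ∀ f : Fin (n + 1) → ℕ,
        ∑ t ∈ Finset.univ.filter (fun t => t < i), f t + ∑ t ∈ T, f t = ∑ t, f t :=
      fun f => Finset.sum_filter_add_sum_filter_not _ _ f
    have hprefsum : ∑ t ∈ Finset.univ.filter (fun t => t < i), mu t
        = ∑ t ∈ Finset.univ.filter (fun t => t < i), lam t := by
      apply Finset.sum_congr rfl
      intro t ht
      exact hpre t (Finset.mem_filter.mp ht).2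
    have hsufsum : ∑ t ∈ T, mu t = ∑ t ∈ T, lam t := by
      have h1 := hsplit mu
      have h2 := hsplit lam
      omega
    have hsufcnt : ∀ ρ, ρ < m →
        (T.filter fun t => mu t % m = ρ).card = (T.filter fun t => lam t % m = ρ).card := by
      intro ρ hρ
      have emu := Finset.card_filter_add_card_filter_not
        (s := Finset.univ.filter fun t => mu t % m = ρ) (p := fun t => t < i)
      have elam := Finset.card_filter_add_card_filter_not
        (s := Finset.univ.filter fun t => lam t % m = ρ) (p := fun t => t < i)
      have hpref_eq : (Finset.univ.filter fun t => mu t % m = ρ).filter (fun t => t < i)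
          = (Finset.univ.filter fun t => lam t % m = ρ).filter (fun t => t < i) := by
        rw [Finset.filter_filter, Finset.filter_filter]
        apply Finset.filter_congr
        intro t _
        constructor
        · rintro ⟨h1, h2⟩
          exact ⟨by rw [← hpre t h2]; exact h1, h2⟩
        · rintro ⟨h1, h2⟩
          exact ⟨by rw [hpre t h2]; exact h1, h2⟩
      have hsuf_mu : (Finset.univ.filter fun t => mu t % m = ρ).filter (fun t => ¬ t < i)
          = T.filter (fun t => mu t % m = ρ) := by
        rw [Finset.filter_filter, hT, Finset.filter_filter]
        apply Finset.filter_congr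
        intro t _
        exact and_comm
      have hsuf_lam : (Finset.univ.filter fun t => lam t % m = ρ).filter (fun t => ¬ t < i)
          = T.filter (fun t => lam t % m = ρ) := by
        rw [Finset.filter_filter, hT, Finset.filter_filter]
        apply Finset.filter_congr
        intro t _
        exact and_comm
      rw [hsuf_mu] at emu
      rw [hsuf_lam] at elam
      rw [hpref_eq] at emu
      have := hcnt ρ hρ
      omega
    have hle1 : ∀ t ∈ T, v (lam t % m) ≤ lam t := fun t _ => P1 (lam t) (hcle t)
    have hle2 : ∀ t ∈ T, mu t ≤ v (mu t % m) := by
      intro t ht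
      apply P2
      have h1 : mu t ≤ mu i := hmu (hTle t ht)
      omega
    have hfib : ∀ f : Fin (n + 1) → ℕ, ∑ t ∈ T, v (f t % m)
        = ∑ ρ ∈ Finset.range m, (T.filter fun t => f t % m = ρ).card * v ρ := by
      intro f
      rw [← Finset.sum_fiberwise_of_maps_to (g := fun t => f t % m) (t := Finset.range m)
        (fun t _ => Finset.mem_range.mpr (Nat.mod_lt _ hm)) (fun t => v (f t % m))]
      apply Finset.sum_congr rfl
      intro ρ _
      calc ∑ t ∈ T.filter (fun t => f t % m = ρ), v (f t % m)
          = ∑ t ∈ T.filter (fun t => f t % m = ρ), v ρ := by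
            apply Finset.sum_congr rfl
            intro t ht
            rw [(Finset.mem_filter.mp ht).2]
        _ = (T.filter fun t => f t % m = ρ).card * v ρ := by
            rw [Finset.sum_const, smul_eq_mul]
    have hveq : ∑ t ∈ T, v (mu t % m) = ∑ t ∈ T, v (lam t % m) := by
      rw [hfib mu, hfib lam]
      apply Finset.sum_congr rfl
      intro ρ hρ
      rw [hsufcnt ρ (Finset.mem_range.mp hρ)]
    have hs1 : ∑ t ∈ T, v (lam t % m) ≤ ∑ t ∈ T, lam t := Finset.sum_le_sum hle1
    have hs2 : ∑ t ∈ T, mu t ≤ ∑ t ∈ T, v (mu t % m) := Finset.sum_le_sum hle2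
    have heq2 : ∑ t ∈ T, mu t = ∑ t ∈ T, v (mu t % m) := by omega
    have heq1 : ∑ t ∈ T, v (lam t % m) = ∑ t ∈ T, lam t := by omega
    have hptmu : ∀ t ∈ T, mu t = v (mu t % m) := (Finset.sum_eq_sum_iff_of_le hle2).mp heq2
    have hptlam : ∀ t ∈ T, v (lam t % m) = lam t := (Finset.sum_eq_sum_iff_of_le hle1).mp heq1
    have hρ₀m : lam i % m < m := Nat.mod_lt _ hm
    have hlampos : 0 < (T.filter fun t => lam t % m = lam i % m).card :=
      Finset.card_pos.mpr ⟨i, Finset.mem_filter.mpr ⟨hiT, rfl⟩⟩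
    have hmupos : 0 < (T.filter fun t => mu t % m = lam i % m).card := by
      rw [hsufcnt _ hρ₀m]
      exact hlampos
    obtain ⟨t, ht⟩ := Finset.card_pos.mp hmupos
    obtain ⟨htT, htρ⟩ := Finset.mem_filter.mp ht
    have h1 : mu t = v (lam i % m) := by rw [hptmu t htT, htρ]
    have h2 : v (lam i % m) = lam i := hptlam i hiT
    have h3 : mu t ≤ mu i := hmu (hTle t htT)
    omega

/-- Key lemma C: an element with spread > m is not the minimizer of the sum of squares,
among antitone functions with the same sum and residue counts. -/
lemma clem (n m : ℕ) (hm : 0 < m) (lam : Fin (n + 1) → ℕ) (hlam : Antitone lam)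
    (hbig : lam (Fin.last n) + m < lam 0) :
    ∃ mu : Fin (n + 1) → ℕ, Antitone mu ∧ (∑ t, mu t = ∑ t, lam t) ∧
      (∀ ρ : ℕ, (Finset.univ.filter fun t => mu t % m = ρ).card =
        (Finset.univ.filter fun t => lam t % m = ρ).card) ∧
      ∑ t, mu t * mu t < ∑ t, lam t * lam t := by
  classical
  have h0l : (0 : Fin (n + 1)) ≠ Fin.last n := by
    intro h
    have : lam 0 = lam (Fin.last n) := congrArg lam h
    omega
  set a := lam 0 - m with ha
  set b := lam (Fin.last n) + m with hb
  have ham : a + m = lam 0 := by omega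
  set nu' := Function.update (Function.update lam 0 a) (Fin.last n) b with hnu
  have hnu0 : nu' 0 = a := by
    rw [hnu, Function.update_of_ne h0l, Function.update_self]
  have hnul : nu' (Fin.last n) = b := by rw [hnu, Function.update_self]
  have hnuo : ∀ t, t ≠ 0 → t ≠ Fin.last n → nu' t = lam t := by
    intro t h1 h2
    rw [hnu, Function.update_of_ne h2, Function.update_of_ne h1]
  have hres : ∀ t, nu' t % m = lam t % m := by
    intro t
    by_cases h1 : t = Fin.last n
    · subst h1
      rw [hnul, hb, Nat.add_mod_right]
    · by_cases h2 : t = 0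
      · subst h2
        rw [hnu0]
        conv_rhs => rw [← ham]
        rw [Nat.add_mod_right]
      · rw [hnuo t h2 h1]
  set e : Equiv.Perm (Fin (n + 1)) := Fin.revPerm.trans (Tuple.sort nu') with he
  have hsum_nu : ∀ g : ℕ → ℕ, ∑ t, g (nu' t)
      = g b + (g a + ∑ t ∈ (Finset.univ \ {Fin.last n}) \ {(0 : Fin (n + 1))}, g (lam t)) := by
    intro g
    have e1 : (fun t => g (nu' t))
        = Function.update (Function.update (fun t => g (lam t)) 0 (g a)) (Fin.last n) (g b) := by
      rw [hnu]
      have c1 := Function.comp_update g (Function.update lam 0 a) (Fin.last n) b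
      have c2 := Function.comp_update g lam 0 a
      calc (fun t => g (Function.update (Function.update lam 0 a) (Fin.last n) b t))
          = g ∘ Function.update (Function.update lam 0 a) (Fin.last n) b := rfl
        _ = Function.update (g ∘ Function.update lam 0 a) (Fin.last n) (g b) := c1
        _ = Function.update (Function.update (g ∘ lam) 0 (g a)) (Fin.last n) (g b) := by rw [c2]
    rw [e1]
    rw [Finset.sum_update_of_mem (Finset.mem_univ (Fin.last n))]
    congr 1
    have h0mem : (0 : Fin (n + 1)) ∈ Finset.univ \ {Fin.last n} := by
      simp [h0l]
    rw [Finset.sum_update_of_mem h0mem]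
  have hsum_lam : ∀ g : ℕ → ℕ, ∑ t, g (lam t)
      = g (lam (Fin.last n)) + (g (lam 0)
        + ∑ t ∈ (Finset.univ \ {Fin.last n}) \ {(0 : Fin (n + 1))}, g (lam t)) := by
    intro g
    rw [Finset.sum_eq_add_sum_sdiff_singleton_of_mem (Finset.mem_univ (Fin.last n)) (fun t => g (lam t))]
    congr 1
    have h0mem : (0 : Fin (n + 1)) ∈ Finset.univ \ {Fin.last n} := by
      simp [h0l]
    rw [Finset.sum_eq_add_sum_sdiff_singleton_of_mem h0mem (fun t => g (lam t))]
  refine ⟨fun t => nu' (e t), ?_, ?_, ?_, ?_⟩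
  · intro s t hst
    have h1 : t.rev ≤ s.rev := Fin.rev_le_rev.mpr hst
    have := Tuple.monotone_sort nu' h1
    simpa [he, Equiv.trans_apply] using this
  · have h1 : ∑ t, nu' (e t) = ∑ t, nu' t := Equiv.sum_comp e nu'
    rw [h1]
    have h2 := hsum_nu (fun x => x)
    have h3 := hsum_lam (fun x => x)
    omega
  · intro ρ
    have h1 : (Finset.univ.filter fun t => nu' (e t) % m = ρ).card
        = (Finset.univ.filter fun t => nu' t % m = ρ).card :=
      card_filter_comp_perm e (fun t => nu' t % m = ρ)
    rw [h1]
    congr 1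
    apply Finset.filter_congr
    intro t _
    rw [hres t]
  · have h1 : ∑ t, nu' (e t) * nu' (e t) = ∑ t, nu' t * nu' t :=
      Fintype.sum_equiv e _ _ (fun t => rfl)
    rw [h1]
    have h2 := hsum_nu (fun x => x * x)
    have h3 := hsum_lam (fun x => x * x)
    rw [h2, h3]
    have hBa : lam (Fin.last n) < a := by omega
    have h5 : lam (Fin.last n) * m < a * m := Nat.mul_lt_mul_of_lt_of_le hBa (le_refl m) hm
    have key : b * b + a * a < lam (Fin.last n) * lam (Fin.last n) + lam 0 * lam 0 := by
      rw [← ham, hb]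
      ring_nf
      nlinarith [h5]
    omega

/-- if the set `K_d(ν)` of partitions
`μ = (μ_1 ≥ … ≥ μ_{k+1} ≥ 0)` of `d` whose parts have exactly `ν_a` members in
each congruence class `a mod (r−1)` is nonempty, then it contains exactly one
element `λ` with `λ_1 − λ_{k+1} ≤ r−1`, and every other element of `K_d(ν)` is
strictly greater than `λ` in the lexicographic order. -/
theorem stmt14 (k r : ℕ) (hk : 1 ≤ k) (hr : 2 ≤ r) (d : ℕ)
    (ν : Fin (r - 1) → ℕ) (hν : (∑ a, ν a) = k + 1)
    (Kset : Set (Fin (k + 1) → ℕ))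
    (hKset : Kset = {μ : Fin (k + 1) → ℕ | Antitone μ ∧ (∑ i, μ i) = d ∧
      ∀ a : Fin (r - 1),
        (Finset.univ.filter (fun i : Fin (k + 1) => μ i % (r - 1) = (a : ℕ))).card = ν a})
    (hne : Kset.Nonempty) :
    ∃ lam ∈ Kset,
      lam ⟨0, by omega⟩ - lam ⟨k, by omega⟩ ≤ r - 1 ∧
      (∀ lam' ∈ Kset, lam' ⟨0, by omega⟩ - lam' ⟨k, by omega⟩ ≤ r - 1 → lam' = lam) ∧
      ∀ μ ∈ Kset, μ ≠ lam →
        ∃ i : Fin (k + 1), (∀ j : Fin (k + 1), j < i → μ j = lam j) ∧ lam i < μ i := by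
  classical
  have hm : 0 < r - 1 := by omega
  have hmem : ∀ μ, μ ∈ Kset ↔ (Antitone μ ∧ (∑ i, μ i) = d ∧
      ∀ a : Fin (r - 1),
        (Finset.univ.filter (fun i : Fin (k + 1) => μ i % (r - 1) = (a : ℕ))).card = ν a) := by
    intro μ
    rw [hKset]
    rfl
  have h0eq : (⟨0, by omega⟩ : Fin (k + 1)) = 0 := by
    apply Fin.ext
    simp
  have hlasteq : (⟨k, by omega⟩ : Fin (k + 1)) = Fin.last k := rfl
  have hfin : Kset.Finite := by
    apply Set.Finite.subset (Set.Finite.pi (fun _ : Fin (k + 1) => Set.finite_Iic d))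
    intro μ hμ
    obtain ⟨hA, hsd, _⟩ := (hmem μ).mp hμ
    intro i _
    have : μ i ≤ ∑ t, μ t :=
      Finset.single_le_sum (fun t _ => Nat.zero_le _) (Finset.mem_univ i)
    rw [hsd] at this
    exact this
  obtain ⟨lam, hlamF, hmin⟩ := Finset.exists_min_image hfin.toFinset
    (fun μ => ∑ t, μ t * μ t) (hfin.toFinset_nonempty.mpr hne)
  have hlamK : lam ∈ Kset := hfin.mem_toFinset.mp hlamF
  obtain ⟨hanti, hsumd, hcnts⟩ := (hmem lam).mp hlamK
  have hspread : lam 0 - lam (Fin.last k) ≤ r - 1 := by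
    by_contra hcon
    have hbig : lam (Fin.last k) + (r - 1) < lam 0 := by omega
    obtain ⟨mu, hmu_anti, hmu_sum, hmu_cnt, hmu_sq⟩ := clem k (r - 1) hm lam hanti hbig
    have hmuK : mu ∈ Kset := by
      apply (hmem mu).mpr
      refine ⟨hmu_anti, by rw [hmu_sum]; exact hsumd, ?_⟩
      intro a
      rw [hmu_cnt (a : ℕ)]
      exact hcnts a
    have := hmin mu (hfin.mem_toFinset.mpr hmuK)
    omega
  have hB : ∀ mu ∈ Kset, mu ≠ lam →
      ∃ i, (∀ j, j < i → mu j = lam j) ∧ lam i < mu i := by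
    intro mu hmuK hne'
    obtain ⟨hA, hS, hC⟩ := (hmem mu).mp hmuK
    apply bprime k (r - 1) hm lam mu hanti hA (hS.trans hsumd.symm) ?_ (by omega) hne'
    intro ρ hρ
    exact (hC ⟨ρ, hρ⟩).trans (hcnts ⟨ρ, hρ⟩).symm
  refine ⟨lam, hlamK, ?_, ?_, hB⟩
  · rw [h0eq, hlasteq]
    exact hspread
  · intro lam' hK' hsp'
    rw [h0eq, hlasteq] at hsp'
    by_contra hne'
    obtain ⟨i, hpre, hlt⟩ := hB lam' hK' hne'
    obtain ⟨hA', hS', hC'⟩ := (hmem lam').mp hK'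
    have hcnt' : ∀ ρ, ρ < r - 1 →
        (Finset.univ.filter fun t => lam t % (r - 1) = ρ).card =
        (Finset.univ.filter fun t => lam' t % (r - 1) = ρ).card := by
      intro ρ hρ
      exact (hcnts ⟨ρ, hρ⟩).trans (hC' ⟨ρ, hρ⟩).symm
    obtain ⟨i', hpre', hlt'⟩ := bprime k (r - 1) hm lam' lam hA' hanti
      (hsumd.trans hS'.symm) hcnt' (by omega) (fun h => hne' h.symm)
    rcases lt_trichotomy i i' with h | h | h
    · have := hpre' i h
      omega
    · subst h
      omega
    · have := hpre i' h
      omega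
end

section
/- Fix integers k ≥ 1, r ≥ 2, and let τ ∈ ℂ be a primitive (r−1)-th root of unity (τ = 1 when r = 2). In R̄ = ℂ[e_0, e_1, e_2, …], the ideal J̄ generated by the elements ∑_{i_1+…+i_{k+1} = d, i_c ≥ 0} τ^{p_2 i_2 + … + p_{k+1} i_{k+1}} e_{i_1} ⋯ e_{i_{k+1}} (over all d ≥ 0 and (p_2,…,p_{k+1}) ∈ ℤ^k) coincides with the ideal generated by the following elements: for every D ≥ 0 and every tuple ν = (ν_0,…,ν_{r−2}) of nonnegative integers with ν_0 + … + ν_{r−2} = k+1, letting (j_1 ≤ j_2 ≤ … ≤ j_{k+1}) be the nondecreasing sequence in which each value j ∈ {0,…,r−2} occurs exactly ν_j times, the element ∑_{l_1+…+l_{k+1} = D, l_c ≥ 0} e_{(r−1)l_1 + j_1} e_{(r−1)l_2 + j_2} ⋯ e_{(r−1)l_{k+1} + j_{k+1}} (the coefficient of z^D in e_{12}(z)^{ν_0} e_{13}(z)^{ν_1} ⋯ e_{1r}(z)^{ν_{r−2}}, where e_{1,j+2}(z) = ∑_{l≥0} e_{(r−1)l+j} z^l). -/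
open MvPolynomial

open Finset in
section


open MvPolynomial Finset

noncomputable def Hg (k m : ℕ) (j : Fin (k+1) → ℕ) (D : ℕ) : MvPolynomial ℕ ℂ :=
  ∑ l ∈ Finset.Nat.antidiagonalTuple (k + 1) D, ∏ c, MvPolynomial.X (m * l c + j c)

def Jset (k m d : ℕ) : Finset (Fin (k+1) → ℕ) :=
  (Fintype.piFinset fun _ : Fin (k+1) => Finset.range m).filter
    (fun j => (∑ c, j c) ≤ d ∧ (∑ c, j c) % m = d % m)

lemma Hperm (k m : ℕ) (j : Fin (k+1) → ℕ) (D : ℕ) (σ : Equiv.Perm (Fin (k+1))) :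
    Hg k m (j ∘ σ) D = Hg k m j D := by
  unfold Hg
  refine Finset.sum_nbij' (fun l => l ∘ σ.symm) (fun l => l ∘ σ) ?_ ?_ ?_ ?_ ?_
  · intro l hl
    rw [Finset.Nat.mem_antidiagonalTuple] at hl ⊢
    rw [← hl]
    exact Equiv.sum_comp σ.symm l
  · intro l hl
    rw [Finset.Nat.mem_antidiagonalTuple] at hl ⊢
    rw [← hl]
    exact Equiv.sum_comp σ l
  · intro l _; funext c; simp
  · intro l _; funext c; simp
  · intro l _
    rw [← Equiv.prod_comp σ (fun c => MvPolynomial.X (m * (l ∘ σ.symm) c + j c))]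
    simp [Function.comp]

lemma decomp (k m : ℕ) (hm : 0 < m) (d : ℕ) (F : (Fin (k+1) → ℕ) → MvPolynomial ℕ ℂ) :
    ∑ i ∈ Finset.Nat.antidiagonalTuple (k+1) d, F i
      = ∑ j ∈ Jset k m d, ∑ l ∈ Finset.Nat.antidiagonalTuple (k+1) ((d - ∑ c, j c)/m),
          F (fun c => m * l c + j c) := by
  rw [Finset.sum_sigma']
  refine (Finset.sum_nbij' (fun i => ⟨fun c => i c % m, fun c => i c / m⟩)
    (fun x => fun c => m * x.2 c + x.1 c) ?_ ?_ ?_ ?_ ?_).symm.symm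
  · intro i hi
    rw [Finset.Nat.mem_antidiagonalTuple] at hi
    have hsplit : d = m * (∑ c, i c / m) + ∑ c, i c % m := by
      rw [Finset.mul_sum, ← Finset.sum_add_distrib, ← hi]
      exact (Finset.sum_congr rfl fun c _ => (Nat.div_add_mod (i c) m).symm)
    rw [Finset.mem_sigma]
    constructor
    · rw [Jset, Finset.mem_filter]
      have h1 : (fun c => i c % m) ∈ Fintype.piFinset fun _ : Fin (k+1) => Finset.range m := by
        simp only [Fintype.mem_piFinset, Finset.mem_range]
        exact fun c => Nat.mod_lt _ hm
      have h2 : (∑ c, i c % m) ≤ d := by omega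
      have h3 : (∑ c, i c % m) % m = d % m := by rw [hsplit, Nat.mul_add_mod]
      exact ⟨h1, h2, h3⟩
    · rw [Finset.Nat.mem_antidiagonalTuple]
      have : d - ∑ c, i c % m = m * (∑ c, i c / m) := by omega
      rw [this, Nat.mul_div_cancel_left _ hm]
  · rintro ⟨j, l⟩ hx
    rw [Finset.mem_sigma, Jset, Finset.mem_filter, Finset.Nat.mem_antidiagonalTuple] at hx
    obtain ⟨⟨-, hle, hmod⟩, hsum⟩ := hx
    dsimp only at hsum hle hmod ⊢
    simp only [Finset.Nat.mem_antidiagonalTuple] at hsum ⊢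
    have hdvd : m ∣ d - ∑ c, j c := (Nat.modEq_iff_dvd' hle).mp hmod
    have hh : ∑ c, (m * l c + j c) = m * (∑ c, l c) + ∑ c, j c := by
      rw [Finset.mul_sum, ← Finset.sum_add_distrib]
    rw [hh, hsum, Nat.mul_div_cancel' hdvd]
    omega
  · intro i _; funext c; exact Nat.div_add_mod (i c) m
  · rintro ⟨j, l⟩ hx
    rw [Finset.mem_sigma, Jset, Finset.mem_filter] at hx
    obtain ⟨⟨hpi, -, -⟩, -⟩ := hx
    simp only [Fintype.mem_piFinset, Finset.mem_range] at hpi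
    have h1 : (fun c => (m * l c + j c) % m) = j := by
      funext c; rw [Nat.mul_add_mod, Nat.mod_eq_of_lt (hpi c)]
    have h2 : (fun c => (m * l c + j c) / m) = l := by
      funext c; rw [Nat.mul_add_div hm, Nat.div_eq_of_lt (hpi c), Nat.add_zero]
    dsimp only
    rw [h1, h2]
  · intro i _
    congr 1
    funext c
    exact (Nat.div_add_mod (i c) m).symm

lemma zpow_sum₀_s15 {τ : ℂ} (hτ : τ ≠ 0) {α : Type*} (s : Finset α) (g : α → ℤ) :
    τ ^ (∑ a ∈ s, g a) = ∏ a ∈ s, τ ^ g a := by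
  classical
  induction s using Finset.cons_induction with
  | empty => simp
  | cons a s ha ih => rw [Finset.sum_cons, Finset.prod_cons, zpow_add₀ hτ, ih]

lemma Gdecomp (k m : ℕ) (hm : 0 < m) (τ : ℂ) (hτ1 : τ ^ m = 1) (d : ℕ) (p : Fin k → ℤ) :
    ∑ i ∈ Finset.Nat.antidiagonalTuple (k+1) d,
        MvPolynomial.C (τ ^ (∑ c : Fin k, p c * ((i c.succ : ℕ) : ℤ))) *
          ∏ c : Fin (k+1), MvPolynomial.X (i c)
    = ∑ j ∈ Jset k m d,
        MvPolynomial.C (τ ^ (∑ c : Fin k, p c * ((j c.succ : ℕ) : ℤ))) *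
          Hg k m j ((d - ∑ c, j c)/m) := by
  have hτ0 : τ ≠ 0 := by
    intro h; rw [h, zero_pow hm.ne'] at hτ1; exact zero_ne_one hτ1
  have hτz : τ ^ ((m : ℕ) : ℤ) = 1 := by rw [zpow_natCast, hτ1]
  rw [decomp k m hm d]
  refine Finset.sum_congr rfl fun j hj => ?_
  unfold Hg
  rw [Finset.mul_sum]
  refine Finset.sum_congr rfl fun l hl => ?_
  congr 2
  have : (∑ c : Fin k, p c * (((fun c => m * l c + j c) c.succ : ℕ) : ℤ))
      = (∑ c : Fin k, p c * ((j c.succ : ℕ) : ℤ)) + ((m : ℕ) : ℤ) * ∑ c : Fin k, p c * (l c.succ : ℤ) := by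
    dsimp only
    rw [Finset.mul_sum, ← Finset.sum_add_distrib]
    refine Finset.sum_congr rfl fun c _ => ?_
    push_cast
    ring
  rw [this, zpow_add₀ hτ0, zpow_mul, hτz, one_zpow, mul_one]

lemma single_sum (m : ℕ) (hm : 0 < m) (τ : ℂ) (hτ : IsPrimitiveRoot τ m)
    (a b : ℕ) (ha : a < m) (hb : b < m) :
    ∑ t ∈ Finset.range m, τ ^ ((t : ℤ) * ((a : ℤ) - (b : ℤ))) = if a = b then (m : ℂ) else 0 := by
  by_cases h : a = b
  · simp [h, sub_self]
  · rw [if_neg h]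
    set x : ℂ := τ ^ ((a : ℤ) - (b : ℤ)) with hx
    have hterm : ∀ t : ℕ, τ ^ ((t : ℤ) * ((a : ℤ) - (b : ℤ))) = x ^ t := by
      intro t
      rw [mul_comm, zpow_mul, hx, zpow_natCast]
    have hx1 : x ≠ 1 := by
      intro heq
      rw [hx, hτ.zpow_eq_one_iff_dvd] at heq
      have hdvd := heq
      have := Int.eq_zero_of_dvd_of_natAbs_lt_natAbs hdvd (by omega)
      omega
    have hxm : x ^ m = 1 := by
      rw [hx, ← zpow_natCast, ← zpow_mul, mul_comm, zpow_mul, zpow_natCast, hτ.pow_eq_one,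
        one_zpow]
    rw [Finset.sum_congr rfl fun t _ => hterm t, geom_sum_eq hx1, hxm, sub_self, zero_div]

lemma ortho (k m : ℕ) (hm : 0 < m) (τ : ℂ) (hτ : IsPrimitiveRoot τ m)
    (a b : Fin k → ℕ) (ha : ∀ c, a c < m) (hb : ∀ c, b c < m) :
    ∑ q ∈ Fintype.piFinset (fun _ : Fin k => Finset.range m),
      τ ^ (∑ c : Fin k, ((q c : ℕ) : ℤ) * ((a c : ℤ) - (b c : ℤ)))
    = if (∀ c, a c = b c) then ((m : ℂ)) ^ k else 0 := by
  have hτ0 : τ ≠ 0 := by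
    intro h
    have := hτ.pow_eq_one
    rw [h, zero_pow hm.ne'] at this; exact zero_ne_one this
  have : ∀ q ∈ Fintype.piFinset (fun _ : Fin k => Finset.range m),
      τ ^ (∑ c : Fin k, ((q c : ℕ) : ℤ) * ((a c : ℤ) - (b c : ℤ)))
      = ∏ c : Fin k, τ ^ (((q c : ℕ) : ℤ) * ((a c : ℤ) - (b c : ℤ))) :=
    fun q _ => zpow_sum₀_s15 hτ0 _ _
  rw [Finset.sum_congr rfl this, ← Finset.prod_univ_sum (fun _ : Fin k => Finset.range m)
    (fun c t => τ ^ ((t : ℤ) * ((a c : ℤ) - (b c : ℤ))))]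
  have heach : ∀ c : Fin k, (∑ t ∈ Finset.range m, τ ^ ((t : ℤ) * ((a c : ℤ) - (b c : ℤ))))
      = if a c = b c then (m : ℂ) else 0 := fun c => single_sum m hm τ hτ (a c) (b c) (ha c) (hb c)
  rw [Finset.prod_congr rfl fun c _ => heach c]
  by_cases h : ∀ c, a c = b c
  · rw [if_pos h]
    rw [Finset.prod_congr rfl fun c _ => if_pos (h c)]
    simp
  · rw [if_neg h]
    obtain ⟨c0, hc0⟩ := not_forall.mp h
    exact Finset.prod_eq_zero (Finset.mem_univ c0) (if_neg hc0)

lemma Hmem (k m : ℕ) (hm : 0 < m) (j : Fin (k+1) → ℕ) (hj : ∀ c, j c < m) (D : ℕ) :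
    Hg k m j D ∈ Ideal.span {g : MvPolynomial ℕ ℂ | ∃ (D : ℕ) (ν : Fin m → ℕ),
        (∑ v, ν v) = k + 1 ∧
        ∃ j : Fin (k + 1) → ℕ, Monotone j ∧
          (∀ v : Fin m,
            (Finset.univ.filter (fun c : Fin (k + 1) => j c = (v : ℕ))).card = ν v) ∧
          g = ∑ l ∈ Finset.Nat.antidiagonalTuple (k + 1) D,
            ∏ c : Fin (k + 1), MvPolynomial.X (m * l c + j c)} := by
  rw [← Hperm k m j D (Tuple.sort j)]
  apply Ideal.subset_span
  have hj' : ∀ c, (j ∘ Tuple.sort j) c < m := fun c => hj _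
  refine ⟨D, fun v => (Finset.univ.filter fun c => (j ∘ Tuple.sort j) c = (v : ℕ)).card, ?_,
    j ∘ Tuple.sort j, Tuple.monotone_sort j, fun v => rfl, rfl⟩
  have hfib := Finset.card_eq_sum_card_fiberwise
    (s := (Finset.univ : Finset (Fin (k+1)))) (t := (Finset.univ : Finset (Fin m)))
    (f := fun c => (⟨(j ∘ Tuple.sort j) c, hj' c⟩ : Fin m)) (fun c _ => Finset.mem_univ _)
  rw [Finset.card_univ, Fintype.card_fin] at hfib
  conv_rhs => rw [hfib]
  refine Finset.sum_congr rfl fun v _ => ?_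
  refine congrArg Finset.card ?_
  ext c
  simp [Fin.ext_iff]


end

/-- the ideal `J̄ ⊆ R̄ = ℂ[e_0,e_1,…]` generated by the elements
`∑_{i_1+⋯+i_{k+1}=d} τ^{p_2 i_2+⋯+p_{k+1} i_{k+1}} e_{i_1}⋯e_{i_{k+1}}`
coincides with the ideal generated by the coefficients of
`e_{12}(z)^{ν_0}⋯e_{1r}(z)^{ν_{r−2}}`, i.e. by the elements
`∑_{l_1+⋯+l_{k+1}=D} e_{(r−1)l_1+j_1}⋯e_{(r−1)l_{k+1}+j_{k+1}}`, where
`(j_1 ≤ … ≤ j_{k+1})` is the nondecreasing sequence in which each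
`j ∈ {0,…,r−2}` occurs exactly `ν_j` times. -/
theorem stmt15 (k r : ℕ) (hk : 1 ≤ k) (hr : 2 ≤ r) (τ : ℂ)
    (hτ : IsPrimitiveRoot τ (r - 1)) :
    Ideal.span {g : MvPolynomial ℕ ℂ | ∃ (d : ℕ) (p : Fin k → ℤ),
        g = ∑ i ∈ Finset.Nat.antidiagonalTuple (k + 1) d,
          MvPolynomial.C (τ ^ (∑ c : Fin k, p c * ((i c.succ : ℕ) : ℤ))) *
            ∏ c : Fin (k + 1), MvPolynomial.X (i c)} =
    Ideal.span {g : MvPolynomial ℕ ℂ | ∃ (D : ℕ) (ν : Fin (r - 1) → ℕ),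
        (∑ v, ν v) = k + 1 ∧
        ∃ j : Fin (k + 1) → ℕ, Monotone j ∧
          (∀ v : Fin (r - 1),
            (Finset.univ.filter (fun c : Fin (k + 1) => j c = (v : ℕ))).card = ν v) ∧
          g = ∑ l ∈ Finset.Nat.antidiagonalTuple (k + 1) D,
            ∏ c : Fin (k + 1), MvPolynomial.X ((r - 1) * l c + j c)} := by
  
  set m := r - 1 with hmdef
  have hm : 0 < m := by omega
  have hτ0 : τ ≠ 0 := by
    intro h
    have h1 := hτ.pow_eq_one
    rw [h, zero_pow hm.ne'] at h1
    exact zero_ne_one h1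
  apply le_antisymm
  · rw [Ideal.span_le]
    rintro g ⟨d, p, rfl⟩
    rw [SetLike.mem_coe, Gdecomp k m hm τ hτ.pow_eq_one d p]
    refine Ideal.sum_mem _ fun j hj => Ideal.mul_mem_left _ _ (Hmem k m hm j ?_ _)
    rw [Jset, Finset.mem_filter] at hj
    have h1 := hj.1
    simp only [Fintype.mem_piFinset, Finset.mem_range] at h1
    exact h1
  · rw [Ideal.span_le]
    rintro g ⟨D, ν, hsum, j, hmono, hcount, rfl⟩
    have hj : ∀ c, j c < m := by
      intro c0
      have hfib := Finset.card_eq_sum_card_fiberwise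
        (s := Finset.univ.filter fun c : Fin (k+1) => j c < m)
        (t := (Finset.univ : Finset (Fin m)))
        (f := fun c => if h : j c < m then (⟨j c, h⟩ : Fin m) else ⟨0, hm⟩)
        (fun c _ => Finset.mem_univ _)
      have hfilt : ∀ v : Fin m,
          ((Finset.univ.filter fun c : Fin (k+1) => j c < m).filter
            fun c => (if h : j c < m then (⟨j c, h⟩ : Fin m) else ⟨0, hm⟩) = v)
          = Finset.univ.filter fun c : Fin (k+1) => j c = (v : ℕ) := by
        intro v
        ext c
        simp only [Finset.mem_filter, Finset.mem_univ, true_and]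
        constructor
        · rintro ⟨h1, h2⟩
          rw [dif_pos h1] at h2
          simpa [Fin.ext_iff] using h2
        · intro h1
          have hlt : j c < m := h1 ▸ v.isLt
          refine ⟨hlt, ?_⟩
          rw [dif_pos hlt]
          exact Fin.ext h1
      simp only [hfilt] at hfib
      have hcard : (Finset.univ.filter fun c : Fin (k+1) => j c < m).card = k + 1 := by
        rw [hfib, Finset.sum_congr rfl (fun v _ => hcount v), hsum]
      have huniv : (Finset.univ.filter fun c : Fin (k+1) => j c < m) = Finset.univ :=
        Finset.eq_univ_of_card _ (by rw [hcard]; simp)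
      have hc0 : c0 ∈ Finset.univ.filter fun c : Fin (k+1) => j c < m :=
        huniv.symm ▸ Finset.mem_univ c0
      exact (Finset.mem_filter.mp hc0).2
    set d := m * D + ∑ c, j c with hddef
    have hmodj : (∑ c, j c) % m = d % m := by
      show (∑ c, j c) % m = (m * D + ∑ c, j c) % m
      rw [Nat.mul_add_mod]
    have hjJ : j ∈ Jset k m d := by
      rw [Jset, Finset.mem_filter]
      exact ⟨by simpa [Fintype.mem_piFinset] using hj, by omega, hmodj⟩
    have hDj : (d - ∑ c, j c) / m = D := by
      have h : d - ∑ c, j c = m * D := by omega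
      rw [h, Nat.mul_div_cancel_left _ hm]
    have key : ∑ q ∈ Fintype.piFinset (fun _ : Fin k => Finset.range m),
        MvPolynomial.C (τ ^ (-(∑ c : Fin k, ((q c : ℕ) : ℤ) * ((j c.succ : ℕ) : ℤ)))) *
          (∑ i ∈ Finset.Nat.antidiagonalTuple (k+1) d,
            MvPolynomial.C (τ ^ (∑ c : Fin k, ((q c : ℕ) : ℤ) * ((i c.succ : ℕ) : ℤ))) *
              ∏ c : Fin (k+1), MvPolynomial.X (i c))
        = MvPolynomial.C ((m : ℂ) ^ k) * Hg k m j D := by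
      have step1 : ∀ q ∈ Fintype.piFinset (fun _ : Fin k => Finset.range m),
          MvPolynomial.C (τ ^ (-(∑ c : Fin k, ((q c : ℕ) : ℤ) * ((j c.succ : ℕ) : ℤ)))) *
            (∑ i ∈ Finset.Nat.antidiagonalTuple (k+1) d,
              MvPolynomial.C (τ ^ (∑ c : Fin k, ((q c : ℕ) : ℤ) * ((i c.succ : ℕ) : ℤ))) *
                ∏ c : Fin (k+1), MvPolynomial.X (i c))
          = ∑ j' ∈ Jset k m d,
              MvPolynomial.C (τ ^ (-(∑ c : Fin k, ((q c : ℕ) : ℤ) * ((j c.succ : ℕ) : ℤ)))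
                * τ ^ (∑ c : Fin k, ((q c : ℕ) : ℤ) * ((j' c.succ : ℕ) : ℤ))) *
                Hg k m j' ((d - ∑ c, j' c)/m) := by
        intro q _
        rw [Gdecomp k m hm τ hτ.pow_eq_one d (fun c => ((q c : ℕ) : ℤ)), Finset.mul_sum]
        refine Finset.sum_congr rfl fun j' _ => ?_
        rw [← mul_assoc, ← MvPolynomial.C_mul]
      rw [Finset.sum_congr rfl step1, Finset.sum_comm]
      have step2 : ∀ j' ∈ Jset k m d,
          (∑ q ∈ Fintype.piFinset (fun _ : Fin k => Finset.range m),
            MvPolynomial.C (τ ^ (-(∑ c : Fin k, ((q c : ℕ) : ℤ) * ((j c.succ : ℕ) : ℤ)))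
              * τ ^ (∑ c : Fin k, ((q c : ℕ) : ℤ) * ((j' c.succ : ℕ) : ℤ))) *
              Hg k m j' ((d - ∑ c, j' c)/m))
          = MvPolynomial.C (if (∀ c : Fin k, j' c.succ = j c.succ) then ((m : ℂ)) ^ k else 0) *
              Hg k m j' ((d - ∑ c, j' c)/m) := by
        intro j' hj'
        rw [← Finset.sum_mul, ← map_sum]
        congr 2
        have hb' : ∀ c : Fin k, j' c.succ < m := by
          rw [Jset, Finset.mem_filter] at hj'
          have h1 := hj'.1
          simp only [Fintype.mem_piFinset, Finset.mem_range] at h1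
          exact fun c => h1 _
        rw [← ortho k m hm τ hτ (fun c => j' c.succ) (fun c => j c.succ) hb' (fun c => hj _)]
        refine Finset.sum_congr rfl fun q _ => ?_
        rw [← zpow_add₀ hτ0]
        congr 1
        rw [neg_add_eq_sub, ← Finset.sum_sub_distrib]
        exact Finset.sum_congr rfl fun c _ => (mul_sub _ _ _).symm
      rw [Finset.sum_congr rfl step2]
      rw [Finset.sum_eq_single_of_mem j hjJ]
      · rw [if_pos (fun c => rfl), hDj]
      · intro j' hj' hne
        have hPfalse : ¬ (∀ c : Fin k, j' c.succ = j c.succ) := by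
          intro hP
          apply hne
          have h0 : j' 0 = j 0 := by
            rw [Jset, Finset.mem_filter] at hj'
            obtain ⟨h1, -, h3⟩ := hj'
            simp only [Fintype.mem_piFinset, Finset.mem_range] at h1
            have hmod : (∑ c, j' c) % m = (∑ c, j c) % m := by
              rw [h3, ← hmodj]
            rw [Fin.sum_univ_succ, Fin.sum_univ_succ] at hmod
            have htail : (∑ c : Fin k, j' c.succ) = ∑ c : Fin k, j c.succ :=
              Finset.sum_congr rfl fun c _ => hP c
            rw [htail] at hmod
            have hcancel : j' 0 ≡ j 0 [MOD m] :=
              Nat.ModEq.add_right_cancel' _ hmod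
            have hcc : j' 0 % m = j 0 % m := hcancel
            rw [Nat.mod_eq_of_lt (h1 0), Nat.mod_eq_of_lt (hj 0)] at hcc
            exact hcc
          funext c
          refine Fin.cases h0 (fun c => hP c) c
        rw [if_neg hPfalse, map_zero, zero_mul]
    have hgeq : (∑ l ∈ Finset.Nat.antidiagonalTuple (k + 1) D,
        ∏ c : Fin (k + 1), MvPolynomial.X (m * l c + j c)) = Hg k m j D := rfl
    rw [SetLike.mem_coe, hgeq]
    have hfinal : Hg k m j D = MvPolynomial.C (((m : ℂ) ^ k)⁻¹) *
        ∑ q ∈ Fintype.piFinset (fun _ : Fin k => Finset.range m),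
          MvPolynomial.C (τ ^ (-(∑ c : Fin k, ((q c : ℕ) : ℤ) * ((j c.succ : ℕ) : ℤ)))) *
            (∑ i ∈ Finset.Nat.antidiagonalTuple (k+1) d,
              MvPolynomial.C (τ ^ (∑ c : Fin k, ((q c : ℕ) : ℤ) * ((i c.succ : ℕ) : ℤ))) *
                ∏ c : Fin (k+1), MvPolynomial.X (i c)) := by
      rw [key, ← mul_assoc, ← MvPolynomial.C_mul,
        inv_mul_cancel₀ (pow_ne_zero _ (Nat.cast_ne_zero.mpr hm.ne')), MvPolynomial.C_1, one_mul]
    rw [hfinal]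
    refine Ideal.mul_mem_left _ _ (Ideal.sum_mem _ fun q _ => Ideal.mul_mem_left _ _ ?_)
    exact Ideal.subset_span ⟨d, fun c => ((q c : ℕ) : ℤ), rfl⟩
end
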